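/- arXiv:2507.18953 — 9 statements merged into one kernel-verified Lean document; each statement's English description precedes it below -/
import Mathlib

section
/- Let F be a field of characteristic different from 2 and let f : F → F be an SD map. Then f(0) = 0 and f(1) = 1. -/
/-- A function `f : F → F` on a field `F` is an *SD map* if for all `x ≠ y` one has
`f x ≠ f y` and `f ((x+y)/(x-y)) = (f x + f y) / (f x - f y)`. -/
def IsSDMap {F : Type*} [Field F] (f : F → F) : Prop :=
  ∀ ⦃x y : F⦄, x ≠ y →
    f x ≠ f y ∧ f ((x + y) / (x - y)) = (f x + f y) / (f x - f y)

theorem sd_map_fixes_zero_and_one {F : Type*} [Field F] (hchar : ringChar F ≠ 2)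
    (f : F → F) (hf : IsSDMap f) : f 0 = 0 ∧ f 1 = 1 := by
  have h2 : (2 : F) ≠ 0 := by
    simpa using Ring.two_ne_zero (by simpa [ringChar.eq_iff] using hchar)
  have hne1 : (1 : F) ≠ -1 := fun h => h2 (by linear_combination h)
  set a := f 0 with ha
  set b := f 1 with hb
  set c := f (-1) with hc
  obtain ⟨hab, e1⟩ := hf (one_ne_zero (α := F))
  obtain ⟨hba, e2⟩ := hf (zero_ne_one (α := F))
  obtain ⟨hbc, e3⟩ := hf hne1
  -- simplify arguments
  have e1' : b * (b - a) = b + a := by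
    have h : ((1:F) + 0) / (1 - 0) = 1 := by norm_num
    rw [h] at e1
    field_simp [sub_ne_zero.mpr hab] at e1
    linear_combination e1
  have e2' : c * (a - b) = a + b := by
    have h : ((0:F) + 1) / (0 - 1) = -1 := by norm_num
    rw [h] at e2
    field_simp [sub_ne_zero.mpr hba] at e2
    linear_combination e2
  have e3' : a * (b - c) = b + c := by
    have h : ((1:F) + -1) / (1 - -1) = 0 := by
      rw [add_neg_cancel, zero_div]
    rw [h] at e3
    field_simp [sub_ne_zero.mpr hbc] at e3
    linear_combination e3
  have key : 2 * (a * (a + b)) = 0 := by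
    linear_combination (1 - a) * e1' - (a + 1) * e2' - (a - b) * e3'
  have key' : a * (a + b) = 0 := by
    rcases mul_eq_zero.mp key with h | h
    · exact absurd h h2
    · exact h
  have ha0 : a = 0 := by
    rcases mul_eq_zero.mp key' with h | h
    · exact h
    · -- a + b = 0, so b = -a; from e1' get 2*b^2 = 0 hence b = 0 = a, contradiction
      exfalso
      have hba' : b = -a := by linear_combination h
      have : 2 * (b * b) = 0 := by linear_combination e1' + (b + 1) * h
      have hb0 : b = 0 := by
        rcases mul_eq_zero.mp this with h' | h'
        · exact absurd h' h2
        · exact mul_self_eq_zero.mp h'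
      have ha0 : a = 0 := by linear_combination h - hb0
      exact hab (hb0.trans ha0.symm)
  refine ⟨ha0, ?_⟩
  have hbne : b ≠ 0 := fun h => hab (h.trans ha0.symm)
  have : b * (b - 1) = 0 := by linear_combination e1' + (b + 1) * ha0
  rcases mul_eq_zero.mp this with h | h
  · exact absurd h hbne
  · linear_combination h
end

section
/- Let F be a field of characteristic different from 2 and let f : F → F be an SD map. Then f is an odd function: f(-x) = -f(x) for all x in F. -/
theorem sd_map_odd {F : Type*} [Field F] (hchar : ringChar F ≠ 2)
    (f : F → F) (hf : IsSDMap f) : ∀ x : F, f (-x) = -f x := by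
  have h2 : (2 : F) ≠ 0 := Ring.two_ne_zero hchar
  have h10 : (1 : F) ≠ 0 := one_ne_zero
  -- f(-1) = -f(1)
  obtain ⟨hne10, heq10⟩ := hf h10
  obtain ⟨hne01, heq01⟩ := hf h10.symm
  have hf1 : f ((1 + 0) / (1 - 0)) = f 1 := by norm_num
  rw [hf1] at heq10
  have hfm1 : f ((0 + 1) / (0 - 1)) = f (-1) := by norm_num
  rw [hfm1] at heq01
  have hm1 : f (-1) = - f 1 := by
    rw [heq01, show f 0 + f 1 = f 1 + f 0 from add_comm _ _,
      show f 0 - f 1 = -(f 1 - f 0) by ring, div_neg, ← heq10]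
  -- f 0 = 0
  have h1m1 : (1 : F) ≠ -1 := by
    intro h
    apply h2
    linear_combination h
  obtain ⟨_, heq⟩ := hf h1m1
  have hf0 : f 0 = 0 := by
    have : ((1 : F) + -1) / (1 - -1) = 0 := by
      norm_num
    rw [this, hm1] at heq
    simpa using heq
  intro x
  rcases eq_or_ne x 0 with rfl | hx
  · simp [hf0]
  · have hxm : x ≠ -x := by
      intro h
      apply hx
      have : (2 : F) * x = 0 := by linear_combination h
      rcases mul_eq_zero.mp this with h' | h'
      · exact absurd h' h2
      · exact h'
    obtain ⟨hne, heq'⟩ := hf hxm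
    have hz : (x + -x) / (x - -x) = 0 := by
      simp
    rw [hz, hf0] at heq'
    have hd : f x - f (-x) ≠ 0 := sub_ne_zero.mpr hne
    have := (div_eq_zero_iff.mp heq'.symm).resolve_right hd
    linear_combination this
end

section
/- Let F be a field of characteristic different from 2 and let f : F → F be an SD map. Then f is multiplicative: f(x·y) = f(x)·f(y) for all x, y in F. -/
theorem sd_map_multiplicative {F : Type*} [Field F] (hchar : ringChar F ≠ 2)
    (f : F → F) (hf : IsSDMap f) : ∀ x y : F, f (x * y) = f x * f y := by
  have h2 : (2 : F) ≠ 0 := Ring.two_ne_zero hchar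
  -- f is odd
  have hodd : ∀ t : F, f (-t) = - f t := by
    intro t
    set x := (t + 1) / 2 with hx
    set y := (t - 1) / 2 with hy
    have hsub : x - y = 1 := by rw [hx, hy]; field_simp; ring
    have hsum : x + y = t := by rw [hx, hy]; field_simp; ring
    have hxy : x ≠ y := by
      intro h; rw [h, sub_self] at hsub; exact one_ne_zero hsub.symm
    obtain ⟨hne, heq⟩ := hf hxy
    obtain ⟨hne', heq'⟩ := hf hxy.symm
    have hsub' : y - x = -1 := by rw [← neg_sub, hsub]
    have hsum' : y + x = t := by rw [add_comm, hsum]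
    rw [hsub, hsum, div_one] at heq
    rw [hsub', hsum'] at heq'
    have ht : t / (-1 : F) = -t := by ring
    rw [ht] at heq'
    rw [heq', heq]
    rw [show f y - f x = -(f x - f y) by ring, div_neg, add_comm]
  have h0 : f 0 = 0 := by
    have h := hodd 0
    rw [neg_zero] at h
    have h2f : (2 : F) * f 0 = 0 := by linear_combination h
    rcases mul_eq_zero.mp h2f with h' | h'
    · exact absurd h' h2
    · exact h'
  have h1 : f 1 = 1 := by
    obtain ⟨hne, heq⟩ := hf (one_ne_zero (α := F))
    rw [h0] at hne heq
    simp only [add_zero, sub_zero] at heq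
    rw [div_one] at heq
    rw [heq, div_self hne]
  -- key scaling identity
  have key : ∀ x y z : F, x ≠ y → z ≠ 0 →
      f (x * z) * f y = f (y * z) * f x := by
    intro x y z hxy hz
    have hxyz : x * z ≠ y * z := fun h => hxy (mul_right_cancel₀ hz h)
    obtain ⟨hne1, heq1⟩ := hf hxy
    obtain ⟨hne2, heq2⟩ := hf hxyz
    have harg : (x * z + y * z) / (x * z - y * z) = (x + y) / (x - y) := by
      rw [show x * z + y * z = (x + y) * z by ring,
          show x * z - y * z = (x - y) * z by ring,
          mul_div_mul_right _ _ hz]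
    rw [harg, heq1] at heq2
    have hd1 : f x - f y ≠ 0 := sub_ne_zero.mpr hne1
    have hd2 : f (x * z) - f (y * z) ≠ 0 := sub_ne_zero.mpr hne2
    have := (div_eq_div_iff hd1 hd2).mp heq2
    have h2e : (2 : F) * (f (x * z) * f y) = 2 * (f (y * z) * f x) := by
      linear_combination this
    exact mul_left_cancel₀ h2 h2e
  intro x y
  rcases eq_or_ne y 0 with rfl | hy
  · rw [mul_zero, h0, mul_zero]
  rcases eq_or_ne x 1 with rfl | hx1
  · rw [one_mul, h1, one_mul]
  have := key x 1 y hx1 hy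
  rw [one_mul, h1, mul_one] at this
  rw [this, mul_comm]
end

section
/- Let f : ℚ → ℚ be an SD map. Then f is the identity map: f(x) = x for all x in ℚ. -/
namespace SDAux

variable {f : ℚ → ℚ}

lemma one_zero (hf : IsSDMap f) : f 1 = 1 ∧ f 0 = 0 := by
  have h : ∀ x : ℚ, x ≠ 0 → f 1 * (f x - f 0) = f x + f 0 := by
    intro x hx
    have h2 := (hf hx).2
    rw [add_zero, sub_zero, div_self hx] at h2
    have hne : f x - f 0 ≠ 0 := sub_ne_zero.mpr (hf hx).1
    rw [eq_div_iff hne] at h2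
    exact h2
  have h2 := h 2 (by norm_num)
  have h3 := h 3 (by norm_num)
  have hne : f 2 ≠ f 3 := (hf (show (2:ℚ) ≠ 3 by norm_num)).1
  have key : (f 1 - 1) * (f 2 - f 3) = 0 := by linear_combination h2 - h3
  have h1 : f 1 = 1 := by
    rcases mul_eq_zero.mp key with h' | h'
    · linarith
    · exact absurd (sub_eq_zero.mp h') hne
  rw [h1] at h2
  constructor
  · exact h1
  · linarith

lemma odd (hf : IsSDMap f) (h0 : f 0 = 0) : ∀ x : ℚ, f (-x) = -f x := by
  intro x
  rcases eq_or_ne x 0 with rfl | hx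
  · simp [h0]
  · have hxy : x ≠ -x := fun h => hx (by linarith)
    have h2 := (hf hxy).2
    have hne : f x - f (-x) ≠ 0 := sub_ne_zero.mpr (hf hxy).1
    rw [add_neg_cancel, zero_div, h0] at h2
    rcases div_eq_zero_iff.mp h2.symm with h' | h'
    · linarith
    · exact absurd h' hne

lemma ratio (hf : IsSDMap f) : ∀ x y u v : ℚ, x ≠ y → u ≠ v → x * v = y * u →
    f x * f v = f y * f u := by
  intro x y u v hxy huv h
  have e1 := (hf hxy).2
  have e2 := (hf huv).2
  have hsub : x - y ≠ 0 := sub_ne_zero.mpr hxy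
  have hsub' : u - v ≠ 0 := sub_ne_zero.mpr huv
  have heq : (x + y) / (x - y) = (u + v) / (u - v) := by
    rw [div_eq_div_iff hsub hsub']
    linear_combination (-2 : ℚ) * h
  rw [heq, e2] at e1
  have hne : f x - f y ≠ 0 := sub_ne_zero.mpr (hf hxy).1
  have hne' : f u - f v ≠ 0 := sub_ne_zero.mpr (hf huv).1
  rw [div_eq_div_iff hne' hne] at e1
  linear_combination e1 / 2

lemma mult (hf : IsSDMap f) (h1 : f 1 = 1) (h0 : f 0 = 0) :
    ∀ a x : ℚ, f (a * x) = f a * f x := by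
  intro a x
  rcases eq_or_ne a 0 with rfl | ha
  · simp [h0]
  rcases eq_or_ne x 1 with rfl | hx
  · simp [h1]
  · have hxy : a * x ≠ a := fun h => hx (mul_left_cancel₀ ha (by rw [h, mul_one]))
    have := ratio hf (a * x) a x 1 hxy hx (by ring)
    rw [h1, mul_one] at this
    exact this

lemma addrel (hf : IsSDMap f) (h0 : f 0 = 0)
    (hm : ∀ a x : ℚ, f (a * x) = f a * f x) :
    ∀ x y : ℚ, x ≠ y → f (x + y) * (f x - f y) = f (x - y) * (f x + f y) := by
  intro x y hxy
  have e := (hf hxy).2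
  have hs : x - y ≠ 0 := sub_ne_zero.mpr hxy
  have hkey : f (x + y) = f (x - y) * f ((x + y) / (x - y)) := by
    rw [← hm]
    congr 1
    field_simp
  rw [e] at hkey
  have hne : f x - f y ≠ 0 := sub_ne_zero.mpr (hf hxy).1
  rw [hkey]
  field_simp

lemma f_two_three (hf : IsSDMap f) (h1 : f 1 = 1) (h0 : f 0 = 0)
    (hodd : ∀ x : ℚ, f (-x) = -f x)
    (hm : ∀ a x : ℚ, f (a * x) = f a * f x)
    (hR : ∀ x y : ℚ, x ≠ y → f (x + y) * (f x - f y) = f (x - y) * (f x + f y)) :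
    f 2 = 2 ∧ f 3 = 3 := by
  have ha0 : f 2 ≠ 0 := by
    have := (hf (show (2:ℚ) ≠ 0 by norm_num)).1; rwa [h0] at this
  have ha1' : f 2 ≠ -1 := by
    have := (hf (show (2:ℚ) ≠ -1 by norm_num)).1
    rwa [show (-1 : ℚ) = -(1:ℚ) by norm_num, hodd 1, h1] at this
  have hc0 : f 5 ≠ 0 := by
    have := (hf (show (5:ℚ) ≠ 0 by norm_num)).1; rwa [h0] at this
  have e1 : f 3 * (f 2 - 1) = f 2 + 1 := by
    have := hR 2 1 (by norm_num)
    norm_num [h1] at this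
    linear_combination this
  have e2 : f 5 * (f 3 - f 2) = f 3 + f 2 := by
    have := hR 3 2 (by norm_num)
    norm_num [h1] at this
    linear_combination this
  have h8 : f 8 = f 2 ^ 3 := by
    rw [show (8:ℚ) = 2 * (2 * 2) by norm_num, hm, hm]; ring
  have e3 : f 2 ^ 3 * (f 5 - f 3) = f 2 * (f 5 + f 3) := by
    have := hR 5 3 (by norm_num)
    norm_num [h8] at this
    linear_combination this
  have e3' : f 2 ^ 2 * (f 5 - f 3) = f 5 + f 3 := by
    apply mul_left_cancel₀ ha0
    linear_combination e3
  have key : f 5 * (f 2 + 1) * (2 * f 2 ^ 2 - 4 * f 2) = 0 := by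
    linear_combination (f 2 - 1) * e3' +
      (f 2 ^ 2 + 1 + (f 2 + 1) * (f 5 - 1)) * e1 - (f 2 + 1) * (f 2 - 1) * e2
  have h2a : 2 * f 2 ^ 2 - 4 * f 2 = 0 := by
    rcases mul_eq_zero.mp key with h' | h'
    · rcases mul_eq_zero.mp h' with h'' | h''
      · exact absurd h'' hc0
      · exact absurd (by linarith : f 2 = -1) ha1'
    · exact h'
  have ha2 : f 2 = 2 := by
    have hfac : 2 * f 2 * (f 2 - 2) = 0 := by linear_combination h2a
    rcases mul_eq_zero.mp hfac with h' | h'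
    · rcases mul_eq_zero.mp h' with h'' | h''
      · norm_num at h''
      · exact absurd h'' ha0
    · linarith
  refine ⟨ha2, ?_⟩
  rw [ha2] at e1
  linarith

lemma f_nat (hf : IsSDMap f) (h1 : f 1 = 1) (h0 : f 0 = 0)
    (hf2 : f 2 = 2)
    (hR : ∀ x y : ℚ, x ≠ y → f (x + y) * (f x - f y) = f (x - y) * (f x + f y)) :
    ∀ n : ℕ, f n = n := by
  have key : ∀ n : ℕ, f ((n : ℚ) + 1) = (n : ℚ) + 1 ∧ f ((n : ℚ) + 2) = (n : ℚ) + 2 := by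
    intro n
    induction n with
    | zero => simpa using ⟨h1, hf2⟩
    | succ k ih =>
      obtain ⟨ih1, ih2⟩ := ih
      have cast1 : ((k + 1 : ℕ) : ℚ) + 1 = (k : ℚ) + 2 := by push_cast; ring
      have cast2 : ((k + 1 : ℕ) : ℚ) + 2 = (k : ℚ) + 3 := by push_cast; ring
      constructor
      · rw [cast1]; exact ih2
      · rw [cast2]
        have hknz : (k : ℚ) + 1 ≠ 0 := by
          have : (0:ℚ) ≤ (k : ℚ) := Nat.cast_nonneg k
          intro h; linarith
        have hne : ((k : ℚ) + 2) ≠ 1 := by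
          have : (0:ℚ) ≤ (k : ℚ) := Nat.cast_nonneg k
          intro h; linarith
        have hr := hR ((k : ℚ) + 2) 1 hne
        rw [h1, show (k : ℚ) + 2 + 1 = (k : ℚ) + 3 by ring,
          show (k : ℚ) + 2 - 1 = (k : ℚ) + 1 by ring, ih2, ih1] at hr
        have hfin : f ((k : ℚ) + 3) * ((k : ℚ) + 1) = ((k : ℚ) + 3) * ((k : ℚ) + 1) := by
          linear_combination hr
        exact mul_right_cancel₀ hknz hfin
  intro n
  cases n with
  | zero => simpa using h0
  | succ k =>
    have := (key k).1
    rwa [show ((k + 1 : ℕ) : ℚ) = (k : ℚ) + 1 by push_cast; ring]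

end SDAux

theorem sd_map_rat_eq_id (f : ℚ → ℚ) (hf : IsSDMap f) : ∀ x : ℚ, f x = x := by
  obtain ⟨h1, h0⟩ := SDAux.one_zero hf
  have hodd := SDAux.odd hf h0
  have hm := SDAux.mult hf h1 h0
  have hR := SDAux.addrel hf h0 hm
  obtain ⟨hf2, _⟩ := SDAux.f_two_three hf h1 h0 hodd hm hR
  have hnat := SDAux.f_nat hf h1 h0 hf2 hR
  have hint : ∀ n : ℤ, f n = n := by
    intro n
    obtain ⟨m, rfl | rfl⟩ := Int.eq_nat_or_neg n
    · rw [show ((m : ℤ) : ℚ) = (m : ℚ) by push_cast; ring]; exact hnat m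
    · rw [show ((-(m : ℤ) : ℤ) : ℚ) = -(m : ℚ) by push_cast; ring, hodd, hnat]
  intro x
  have hd : ((x.den : ℚ)) ≠ 0 := by
    exact_mod_cast x.den_ne_zero
  have hmx := hm (x.den : ℚ) x
  have hden : (x.den : ℚ) * x = (x.num : ℚ) := by
    have h := Rat.num_div_den x
    rw [div_eq_iff hd] at h
    linear_combination -h
  rw [hden, hint x.num, hnat x.den] at hmx
  have : f x = (x.num : ℚ) / (x.den : ℚ) := by
    field_simp at hmx ⊢
    linarith [hmx]
  rw [this, Rat.num_div_den]
end

section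
/- Let F be a field of characteristic zero and let f : F → F be an SD map. Then f fixes the prime subfield pointwise: f(q) = q for every rational number q (viewed as an element of F via the canonical embedding of ℚ into F). -/
/-!
Taking `y = 1` in the defining identity shows that `f` commutes with the Möbius involution
`t ↦ (t + 1) / (t - 1)`; since `(x + y) / (x - y)` is that involution applied to `x / y`,
comparing the two gives `f (x / y) = f x / f y`. Multiplicativity turns the defining identity
into `f (x + y) * (f x - f y) = f (x - y) * (f x + f y)`, and with `y = 1` this propagates
`f n = n` from `n - 1` and `n` to `n + 1`. The induction starts once `f 2 = 2`, which is forced by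
the relations among `f 2`, `f 3` and `f 5` coming from the pairs `(2, 1)`, `(3, 2)` and `(4, 1)`.
-/

lemma neg_one_ne_one_of_two_ne_zero {R : Type*} [Ring R] [NeZero (2 : R)] : (-1 : R) ≠ 1 := by
  rw [ne_eq, neg_eq_iff_add_eq_zero, one_add_one_eq_two]
  exact two_ne_zero

lemma div_add_one_div_sub_one_injective {F : Type*} [Field F] [NeZero (2 : F)] {s t : F}
    (hs : s ≠ 1) (ht : t ≠ 1) (h : (s + 1) / (s - 1) = (t + 1) / (t - 1)) : s = t := by
  rw [div_eq_div_iff (sub_ne_zero.mpr hs) (sub_ne_zero.mpr ht)] at h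
  have h2 : (2 : F) * s = 2 * t := by linear_combination -h
  exact mul_left_cancel₀ two_ne_zero h2

namespace IsSDMap

variable {F : Type*} [Field F] {f : F → F}

lemma injective (hf : IsSDMap f) : Function.Injective f :=
  fun _ _ h => by_contra fun hne => (hf hne).1 h

lemma map_div_sub_mul (hf : IsSDMap f) {x y : F} (h : x ≠ y) :
    f ((x + y) / (x - y)) * (f x - f y) = f x + f y := by
  rw [← eq_div_iff (sub_ne_zero.mpr (hf h).1)]
  exact (hf h).2

section NeZeroTwo

variable [NeZero (2 : F)]

lemma map_one (hf : IsSDMap f) : f 1 = 1 := by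
  have hrel (x : F) (hx : x ≠ 0) : f 1 * (f x - f 0) = f x + f 0 := by
    simpa [div_self hx] using hf.map_div_sub_mul hx
  have h : (f 1 - 1) * (f 1 - f (-1)) = 0 := by
    linear_combination hrel 1 one_ne_zero - hrel (-1) (neg_ne_zero.mpr one_ne_zero)
  have hne : f 1 - f (-1) ≠ 0 :=
    sub_ne_zero.mpr (hf.injective.ne neg_one_ne_one_of_two_ne_zero.symm)
  exact sub_eq_zero.mp ((mul_eq_zero.mp h).resolve_right hne)

lemma map_zero (hf : IsSDMap f) : f 0 = 0 := by
  have h := hf.map_div_sub_mul (one_ne_zero (α := F))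
  rw [add_zero, sub_zero, div_one, hf.map_one] at h
  exact (mul_eq_zero.mp (by linear_combination -h : (2 : F) * f 0 = 0)).resolve_left two_ne_zero

lemma map_ne_zero (hf : IsSDMap f) {x : F} (hx : x ≠ 0) : f x ≠ 0 :=
  hf.map_zero ▸ hf.injective.ne hx

lemma map_div_add_one_div_sub_one (hf : IsSDMap f) {t : F} (ht : t ≠ 1) :
    f ((t + 1) / (t - 1)) = (f t + 1) / (f t - 1) := by
  simpa [hf.map_one] using (hf ht).2

lemma map_div (hf : IsSDMap f) (x y : F) : f (x / y) = f x / f y := by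
  rcases eq_or_ne y 0 with rfl | hy
  · simp [hf.map_zero]
  rcases eq_or_ne x y with rfl | hxy
  · rw [div_self hy, div_self (hf.map_ne_zero hy), hf.map_one]
  have hfy := hf.map_ne_zero hy
  have ht : x / y ≠ 1 := fun h => hxy ((div_eq_one_iff_eq hy).mp h)
  have hft : f x / f y ≠ 1 := fun h => (hf hxy).1 ((div_eq_one_iff_eq hfy).mp h)
  have hmob (a b : F) (hb : b ≠ 0) : (a + b) / (a - b) = (a / b + 1) / (a / b - 1) := by
    rw [div_add_one hb, div_sub_one hb, div_div_div_cancel_right₀ hb]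
  have h := (hf hxy).2
  rw [hmob x y hy, hmob (f x) (f y) hfy, hf.map_div_add_one_div_sub_one ht] at h
  exact div_add_one_div_sub_one_injective (hf.map_one ▸ hf.injective.ne ht) hft h

lemma map_inv (hf : IsSDMap f) (x : F) : f x⁻¹ = (f x)⁻¹ := by
  rw [← one_div, hf.map_div, hf.map_one, one_div]

lemma map_mul (hf : IsSDMap f) (x y : F) : f (x * y) = f x * f y := by
  rw [← div_inv_eq_mul, hf.map_div, hf.map_inv, div_inv_eq_mul]

lemma map_neg_one (hf : IsSDMap f) : f (-1) = -1 := by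
  have hsq : f (-1) * f (-1) = 1 := by rw [← hf.map_mul, neg_one_mul, neg_neg, hf.map_one]
  have hne : f (-1) ≠ 1 := by
    simpa only [hf.map_one] using hf.injective.ne (neg_one_ne_one_of_two_ne_zero (R := F))
  exact (mul_self_eq_one_iff.mp hsq).resolve_left hne

lemma map_neg (hf : IsSDMap f) (x : F) : f (-x) = -f x := by
  rw [← neg_one_mul, hf.map_mul, hf.map_neg_one, neg_one_mul]

lemma map_add_mul_sub (hf : IsSDMap f) {x y : F} (h : x ≠ y) :
    f (x + y) * (f x - f y) = f (x - y) * (f x + f y) := by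
  have h' := hf.map_div_sub_mul h
  rw [hf.map_div, div_mul_eq_mul_div, div_eq_iff (hf.map_ne_zero (sub_ne_zero.mpr h))] at h'
  rw [h', mul_comm]

lemma map_add_one (hf : IsSDMap f) {x : F} (hx1 : x ≠ 1) (hx : f x = x)
    (hsub : f (x - 1) = x - 1) : f (x + 1) = x + 1 := by
  have h := hf.map_add_mul_sub hx1
  rw [hx, hsub, hf.map_one, mul_comm (x - 1)] at h
  exact mul_right_cancel₀ (sub_ne_zero.mpr hx1) h

end NeZeroTwo

variable [CharZero F]

lemma map_two (hf : IsSDMap f) : f 2 = 2 := by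
  have h4 : f 4 = f 2 ^ 2 := by rw [sq, ← hf.map_mul]; norm_num
  have h21 : f 3 * (f 2 - 1) = f 2 + 1 := by
    convert hf.map_add_mul_sub (by norm_num : (2 : F) ≠ 1) using 2 <;> norm_num [hf.map_one]
  have h32 : f 5 * (f 3 - f 2) = f 3 + f 2 := by
    convert hf.map_add_mul_sub (by norm_num : (3 : F) ≠ 2) using 2 <;> norm_num [hf.map_one]
  have h41 : f 5 * (f 2 ^ 2 - 1) = f 3 * (f 2 ^ 2 + 1) := by
    convert hf.map_add_mul_sub (by norm_num : (4 : F) ≠ 1) using 2 <;> norm_num [hf.map_one, h4]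
  set a := f 2
  set b := f 3
  have ha : a ≠ 0 := hf.map_ne_zero two_ne_zero
  have ha1 : a + 1 ≠ 0 := by
    rw [← sub_neg_eq_add, sub_ne_zero, ← hf.map_neg_one]
    exact hf.injective.ne (by norm_num)
  have ha2 : a ^ 2 + 1 ≠ 0 := by
    rw [← h4, ← sub_neg_eq_add, sub_ne_zero, ← hf.map_neg_one]
    exact hf.injective.ne (by norm_num)
  -- eliminate `f 5` between `h32` and `h41`, then `f 3` by means of `h21`
  have key : 2 * a * (a - 2) * (a + 1) * (a ^ 2 + 1) = 0 := by
    linear_combination -(a - 1) ^ 2 * (a ^ 2 - 1) * h32 + (a - 1) ^ 2 * (b - a) * h41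
      + ((a ^ 2 + 1) * ((a - 1) * b + a + 1) - (a ^ 2 + 1) * a * (a - 1)
        - (a ^ 2 - 1) * (a - 1)) * h21
  simpa [ha, ha1, ha2, sub_eq_zero] using key

lemma map_natCast (hf : IsSDMap f) (n : ℕ) : f n = n := by
  suffices h : ∀ n : ℕ, f n = n ∧ f (n + 1) = n + 1 from (h n).1
  intro n
  induction n with
  | zero => simpa using ⟨hf.map_zero, hf.map_one⟩
  | succ n ih =>
    refine ⟨mod_cast ih.2, ?_⟩
    rcases eq_or_ne n 0 with rfl | hn
    · simpa [one_add_one_eq_two] using hf.map_two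
    · push_cast
      exact hf.map_add_one (by simpa using hn) ih.2 (by simpa using ih.1)

lemma map_intCast (hf : IsSDMap f) (n : ℤ) : f n = n := by
  obtain ⟨m, rfl | rfl⟩ := n.eq_nat_or_neg
  · exact_mod_cast hf.map_natCast m
  · push_cast
    rw [hf.map_neg, hf.map_natCast]

end IsSDMap

theorem sd_map_fixes_rationals {F : Type*} [Field F] [CharZero F]
    (f : F → F) (hf : IsSDMap f) : ∀ q : ℚ, f (q : F) = (q : F) := by
  intro q
  rw [Rat.cast_def, hf.map_div, hf.map_intCast, hf.map_natCast]
end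

section
/- Let F be a subfield of ℝ and let f : F → F be an SD map that is continuous (with respect to the topology on F induced from ℝ). Then f is the identity map: f(x) = x for all x in F. -/
section General

variable {F : Type*} [Field F] [CharZero F] {f : F → F}

omit [CharZero F] in
lemma sd_inj (hf : IsSDMap f) {x y : F} (h : x ≠ y) : f x ≠ f y := (hf h).1

omit [CharZero F] in
lemma sd_rel (hf : IsSDMap f) {x y : F} (h : x ≠ y) :
    f ((x + y) / (x - y)) = (f x + f y) / (f x - f y) := (hf h).2

lemma sd_one (hf : IsSDMap f) : f 1 = 1 := by
  have h1 : (1:F) ≠ 0 := one_ne_zero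
  have h2 : (2:F) ≠ 0 := two_ne_zero
  have e1 := sd_rel hf h1
  have e2 := sd_rel hf h2
  norm_num at e1 e2
  have d1 : f 1 - f 0 ≠ 0 := sub_ne_zero.mpr (sd_inj hf h1)
  have d2 : f 2 - f 0 ≠ 0 := sub_ne_zero.mpr (sd_inj hf h2)
  have d12 : f 1 - f 2 ≠ 0 := sub_ne_zero.mpr (sd_inj hf (by norm_num : (1:F) ≠ 2))
  rw [eq_div_iff d1] at e1
  rw [eq_div_iff d2] at e2
  have key : (f 1 - 1) * (f 1 - f 2) = 0 := by linear_combination e1 - e2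
  rcases mul_eq_zero.mp key with h | h
  · exact sub_eq_zero.mp h
  · exact absurd h d12

lemma sd_zero (hf : IsSDMap f) : f 0 = 0 := by
  have h1 : (1:F) ≠ 0 := one_ne_zero
  have e1 := sd_rel hf h1
  norm_num at e1
  have d1 : f 1 - f 0 ≠ 0 := sub_ne_zero.mpr (sd_inj hf h1)
  rw [eq_div_iff d1, sd_one hf] at e1
  have h2 : (2:F) * f 0 = 0 := by linear_combination -e1
  exact (mul_eq_zero.mp h2).resolve_left two_ne_zero

lemma sd_neg (hf : IsSDMap f) (x : F) : f (-x) = - f x := by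
  rcases eq_or_ne x 0 with rfl | hx
  · simp [sd_zero hf]
  · have h : x ≠ -x := by
      intro h
      exact hx ((mul_eq_zero.mp (show (2:F) * x = 0 by linear_combination h)).resolve_left
        two_ne_zero)
    have e := sd_rel hf h
    have d : f x - f (-x) ≠ 0 := sub_ne_zero.mpr (sd_inj hf h)
    rw [show (x + -x) / (x - -x) = 0 by rw [add_neg_cancel, zero_div], sd_zero hf] at e
    rcases div_eq_zero_iff.mp e.symm with h' | h'
    · linear_combination h'
    · exact absurd (sub_eq_zero.mp h') (sd_inj hf h)

lemma sd_sigma (hf : IsSDMap f) {x : F} (h : x ≠ 1) :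
    f ((x + 1) / (x - 1)) = (f x + 1) / (f x - 1) := by
  have e := sd_rel hf h
  rwa [sd_one hf] at e

lemma sd_div (hf : IsSDMap f) (x : F) {y : F} (hy : y ≠ 0) : f (x / y) = f x / f y := by
  have hfy : f y ≠ 0 := by rw [← sd_zero hf]; exact sd_inj hf hy
  rcases eq_or_ne x y with rfl | hxy
  · rw [div_self hy, sd_one hf, div_self hfy]
  · have ht : x / y ≠ 1 := by rw [Ne, div_eq_one_iff_eq hy]; exact hxy
    have e1 := sd_sigma hf ht
    have hxy' : x - y ≠ 0 := sub_ne_zero.mpr hxy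
    have ht' : x / y - 1 ≠ 0 := sub_ne_zero.mpr ht
    have harg : (x / y + 1) / (x / y - 1) = (x + y) / (x - y) := by
      field_simp
    rw [harg, sd_rel hf hxy] at e1
    have d1 : f x - f y ≠ 0 := sub_ne_zero.mpr (sd_inj hf hxy)
    have d2 : f (x / y) - 1 ≠ 0 := by
      rw [← sd_one hf]; exact sub_ne_zero.mpr (sd_inj hf ht)
    rw [div_eq_div_iff d1 d2] at e1
    rw [eq_div_iff hfy]
    linear_combination e1 / 2

lemma sd_mul (hf : IsSDMap f) (a b : F) : f (a * b) = f a * f b := by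
  rcases eq_or_ne b 0 with rfl | hb
  · simp [sd_zero hf]
  · have hfb : f b ≠ 0 := by rw [← sd_zero hf]; exact sd_inj hf hb
    have h := sd_div hf (a * b) hb
    rw [mul_div_cancel_right₀ a hb, eq_comm, div_eq_iff hfb] at h
    exact h

lemma sd_addrel (hf : IsSDMap f) {x y : F} (h : x ≠ y) :
    f (x + y) * (f x - f y) = f (x - y) * (f x + f y) := by
  have hxy : x - y ≠ 0 := sub_ne_zero.mpr h
  have e := sd_rel hf h
  rw [sd_div hf (x+y) hxy] at e
  have d1 : f x - f y ≠ 0 := sub_ne_zero.mpr (sd_inj hf h)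
  have d2 : f (x - y) ≠ 0 := by rw [← sd_zero hf]; exact sd_inj hf hxy
  rw [div_eq_div_iff d2 d1] at e
  linear_combination e

lemma sd_E1 (hf : IsSDMap f) : f 3 * (f 2 - 1) = f 2 + 1 := by
  have h := sd_addrel hf (by norm_num : (2:F) ≠ 1)
  norm_num [sd_one hf] at h
  linear_combination h

lemma sd_two (hf : IsSDMap f) : f 2 = 2 := by
  have E1 := sd_E1 hf
  have E2 : f 5 * (f 3 - f 2) = f 3 + f 2 := by
    have h := sd_addrel hf (by norm_num : (3:F) ≠ 2)
    norm_num [sd_one hf] at h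
    linear_combination h
  have E3 : f 5 * (f 2 * f 2 - 1) = f 3 * (f 2 * f 2 + 1) := by
    have h := sd_addrel hf (by norm_num : (4:F) ≠ 1)
    norm_num [sd_one hf] at h
    have h4 : f (4:F) = f 2 * f 2 := by
      rw [show (4:F) = 2 * 2 by norm_num, sd_mul hf]
    rw [h4] at h
    linear_combination h
  set c := f 2 with hc
  set d := f 3 with hd
  set e := f 5 with he
  have hc0 : c ≠ 0 := by rw [hc, ← sd_zero hf]; exact sd_inj hf (by norm_num)
  have hcm1 : c + 1 ≠ 0 := by
    have h := sd_inj hf (by norm_num : (2:F) ≠ -1)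
    rw [sd_neg hf, sd_one hf, ← hc] at h
    intro h'; exact h (by linear_combination h')
  have hc2 : c * c + 1 ≠ 0 := by
    have h := sd_inj hf (by norm_num : (4:F) ≠ -1)
    rw [sd_neg hf, sd_one hf, show (4:F) = 2*2 by norm_num, sd_mul hf, ← hc] at h
    intro h'; exact h (by linear_combination h')
  have key : 2 * c * (c + 1) * (c * c + 1) * (c - 2) = 0 := by
    linear_combination (c-1)^2*(d-c)*E3 - (c-1)^2*(c*c-1)*E2 +
      ((c*c+1)*(c-1)*d - c^4 + c^3 + c^2 + 3*c)*E1
  rcases mul_eq_zero.mp key with h | h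
  · rcases mul_eq_zero.mp h with h | h
    · rcases mul_eq_zero.mp h with h | h
      · rcases mul_eq_zero.mp h with h | h
        · norm_num at h
        · exact absurd h hc0
      · exact absurd h hcm1
    · exact absurd h hc2
  · linear_combination h

lemma sd_three (hf : IsSDMap f) : f 3 = 3 := by
  have E1 := sd_E1 hf
  rw [sd_two hf] at E1
  linear_combination E1

lemma sd_nat (hf : IsSDMap f) : ∀ n : ℕ, f (n : F) = n := by
  have aux : ∀ n : ℕ, f ((n : F) + 2) = (n : F) + 2 ∧ f ((n : F) + 3) = (n : F) + 3 := by
    intro n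
    induction n with
    | zero => simpa using ⟨sd_two hf, sd_three hf⟩
    | succ n ih =>
      obtain ⟨ih2, ih3⟩ := ih
      refine ⟨by push_cast; rw [show (n:F)+1+2 = (n:F)+3 from by ring, ih3], ?_⟩
      have hne : ((n : F) + 3) ≠ 1 := by
        intro h
        have : ((n : F) + 2) = 0 := by linear_combination h
        have : ((n + 2 : ℕ) : F) = 0 := by push_cast; linear_combination this
        exact Nat.cast_ne_zero.mpr (by omega) this
      have h := sd_addrel hf hne
      rw [sd_one hf, ih3, show (n:F) + 3 - 1 = (n:F) + 2 by ring, ih2] at h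
      have hne2 : ((n : F) + 2) ≠ 0 := by
        intro h'
        have : ((n + 2 : ℕ) : F) = 0 := by push_cast; linear_combination h'
        exact Nat.cast_ne_zero.mpr (by omega) this
      have : f ((n:F) + 3 + 1) * ((n:F) + 2) = ((n:F) + 4) * ((n:F) + 2) := by
        linear_combination h
      have := mul_right_cancel₀ hne2 this
      push_cast
      rw [show (n:F) + 1 + 3 = (n:F) + 3 + 1 by ring, this]
      ring
  intro n
  match n with
  | 0 => simpa using sd_zero hf
  | 1 => simpa using sd_one hf
  | (n+2) => push_cast; exact (aux n).1

lemma sd_int (hf : IsSDMap f) : ∀ m : ℤ, f (m : F) = m := by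
  intro m
  obtain ⟨n, rfl | rfl⟩ := m.eq_nat_or_neg
  · push_cast; exact sd_nat hf n
  · push_cast; rw [sd_neg hf, sd_nat hf]

lemma sd_rat (hf : IsSDMap f) : ∀ q : ℚ, f (q : F) = q := by
  intro q
  have hden : ((q.den : ℕ) : F) ≠ 0 := Nat.cast_ne_zero.mpr q.den_nz
  rw [Rat.cast_def, sd_div hf _ hden, sd_int hf, sd_nat hf]

end General

theorem continuous_sd_map_real_subfield_eq_id (F : Subfield ℝ)
    (f : F → F) (hf : IsSDMap f) (hcont : Continuous f) :
    ∀ x : F, f x = x := by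
  have hq : ∀ q : ℚ, f (q : F) = (q : F) := sd_rat hf
  have hdense : Dense (Set.range (fun q : ℚ => (q : F))) := by
    intro x
    rw [Metric.mem_closure_iff]
    intro ε hε
    obtain ⟨q, hq'⟩ := exists_rat_near (x : ℝ) hε
    refine ⟨(q : F), ⟨q, rfl⟩, ?_⟩
    rw [Subtype.dist_eq, dist_comm]
    push_cast
    simpa [Real.dist_eq, abs_sub_comm] using hq'
  have heq : Set.EqOn f id (Set.range fun q : ℚ => (q : F)) := by
    rintro _ ⟨q, rfl⟩; exact hq q
  have hfeq := Continuous.ext_on hdense hcont continuous_id heq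
  intro x
  exact congrFun hfeq x
end

section
/- Let E be a Euclidean subfield of ℝ and let f : E → E be an SD map. Then f is the identity map: f(x) = x for all x in E. -/
set_option maxHeartbeats 2000000 in
theorem sd_map_euclidean_subfield_eq_id (E : Subfield ℝ)
    (hE : ∀ x : ℝ, x ∈ E → 0 ≤ x → ∃ y ∈ E, y ^ 2 = x)
    (f : E → E) (hf : IsSDMap f) :
    ∀ x : E, f x = x := by
  -- square roots inside E
  have hsq : ∀ x : E, 0 ≤ x → ∃ y : E, y ^ 2 = x := by
    intro x hx
    obtain ⟨y, hyE, hy⟩ := hE x x.2 hx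
    exact ⟨⟨y, hyE⟩, Subtype.ext (by push_cast; exact hy)⟩
  -- f 1 = 1 and f 0 = 0
  have e2 := (hf (show (2:E) ≠ 0 by norm_num)).2
  have e3 := (hf (show (3:E) ≠ 0 by norm_num)).2
  norm_num at e2 e3
  have d2 : f 2 - f 0 ≠ 0 := sub_ne_zero.mpr (hf (show (2:E) ≠ 0 by norm_num)).1
  have d3 : f 3 - f 0 ≠ 0 := sub_ne_zero.mpr (hf (show (3:E) ≠ 0 by norm_num)).1
  have hA : f 1 * (f 2 - f 0) = f 2 + f 0 := by
    rw [e2]; exact div_mul_cancel₀ _ d2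
  have hB : f 1 * (f 3 - f 0) = f 3 + f 0 := by
    rw [e3]; exact div_mul_cancel₀ _ d3
  have h23 : f 2 ≠ f 3 := (hf (show (2:E) ≠ 3 by norm_num)).1
  have hf1 : f 1 = 1 := by
    have hz : (f 1 - 1) * (f 2 - f 3) = 0 := by linear_combination hA - hB
    rcases mul_eq_zero.mp hz with h | h
    · linarith [sub_eq_zero.mp h]
    · exact absurd (sub_eq_zero.mp h) h23
  have hf0 : f 0 = 0 := by
    rw [hf1, one_mul] at hA; linarith
  -- injectivity and nonvanishing
  have hinj : Function.Injective f := by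
    intro a b hab
    by_contra h
    exact (hf h).1 hab
  have fne0 : ∀ x : E, x ≠ 0 → f x ≠ 0 := by
    intro x hx h
    exact hx (hinj (h.trans hf0.symm))
  -- oddness
  have fneg : ∀ x : E, f (-x) = -f x := by
    intro x
    rcases eq_or_ne x 0 with rfl | hx
    · simp [hf0]
    · have hxy : x ≠ -x := fun h => hx (by linarith)
      have h1 := (hf hxy).2
      have h2 := (hf hxy).1
      have harg : (x + -x)/(x - -x) = 0 := by
        rw [add_neg_cancel, zero_div]
      rw [harg, hf0] at h1
      have hd : f x - f (-x) ≠ 0 := sub_ne_zero.mpr h2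
      rcases div_eq_zero_iff.mp h1.symm with h | h
      · linarith
      · exact absurd h hd
  -- multiplicativity
  have hratio : ∀ a x y : E, a ≠ 0 → x ≠ y → f (a*x) * f y = f (a*y) * f x := by
    intro a x y ha hxy
    have hxy' : a*x ≠ a*y := fun h => hxy (mul_left_cancel₀ ha h)
    have e1 := (hf hxy).2
    have e2' := (hf hxy').2
    have harg : (a*x + a*y)/(a*x - a*y) = (x+y)/(x-y) := by
      rw [show a*x + a*y = a*(x+y) by ring, show a*x - a*y = a*(x-y) by ring,
          mul_div_mul_left _ _ ha]
    rw [harg, e1] at e2'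
    have d1 : f x - f y ≠ 0 := sub_ne_zero.mpr (hf hxy).1
    have d1' : f (a*x) - f (a*y) ≠ 0 := sub_ne_zero.mpr (hf hxy').1
    have hcm : (f x + f y) * (f (a*x) - f (a*y)) = (f (a*x) + f (a*y)) * (f x - f y) :=
      (div_eq_div_iff d1 d1').mp e2'
    linear_combination hcm / 2
  have fmul : ∀ a x : E, f (a*x) = f a * f x := by
    intro a x
    rcases eq_or_ne a 0 with rfl | ha
    · simp [hf0]
    rcases eq_or_ne x 1 with rfl | hx
    · rw [mul_one, hf1, mul_one]
    · have h := hratio a x 1 ha hx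
      rwa [mul_one, hf1, mul_one] at h
  have fdiv : ∀ a b : E, f (a/b) = f a / f b := by
    intro a b
    rcases eq_or_ne b 0 with rfl | hb
    · simp [hf0]
    · have h := fmul b (a/b)
      rw [mul_div_cancel₀ _ hb] at h
      rw [eq_div_iff (fne0 b hb)]
      linear_combination -h
  -- key relation
  have key : ∀ x y : E, x ≠ y → f (x+y) * (f x - f y) = f (x-y) * (f x + f y) := by
    intro x y hxy
    have e := (hf hxy).2
    rw [fdiv] at e
    have d1 : f (x-y) ≠ 0 := fne0 _ (sub_ne_zero.mpr hxy)
    have d2' : f x - f y ≠ 0 := sub_ne_zero.mpr (hf hxy).1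
    have h := (div_eq_div_iff d1 d2').mp e
    linear_combination h
  -- positivity
  have fpos : ∀ x : E, 0 < x → 0 < f x := by
    intro x hx
    obtain ⟨y, hy⟩ := hsq x hx.le
    have hfx : f x = f y * f y := by
      rw [← hy, sq, fmul]
    have hne : f x ≠ 0 := fne0 x hx.ne'
    have hge : 0 ≤ f x := by rw [hfx]; exact mul_self_nonneg _
    exact lt_of_le_of_ne hge (Ne.symm hne)
  -- strict monotonicity
  have fmonoPos : ∀ x y : E, 0 < x → x < y → f x < f y := by
    intro x y hx hxy
    have hne : y ≠ x := ne_of_gt hxy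
    have e := (hf hne).2
    have hs : 0 < (y+x)/(y-x) := div_pos (by linarith) (by linarith)
    have h1 : 0 < f ((y+x)/(y-x)) := fpos _ hs
    rw [e] at h1
    have hnum : 0 < f y + f x := by
      have := fpos x hx
      have := fpos y (hx.trans hxy)
      linarith
    have hd : f y - f x ≠ 0 := sub_ne_zero.mpr (hf hne).1
    by_contra h
    push_neg at h
    have hlt : f y - f x < 0 := lt_of_le_of_ne (by linarith) hd
    have : (f y + f x)/(f y - f x) < 0 := div_neg_of_pos_of_neg hnum hlt
    linarith
  have fmono : StrictMono f := by
    intro x y hxy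
    rcases lt_trichotomy x 0 with hx | rfl | hx
    · rcases lt_trichotomy y 0 with hy | rfl | hy
      · have h := fmonoPos (-y) (-x) (by linarith) (by linarith)
        rw [fneg, fneg] at h
        linarith
      · rw [hf0]
        have h := fpos (-x) (by linarith)
        rw [fneg] at h
        linarith
      · have h1 := fpos (-x) (by linarith)
        rw [fneg] at h1
        have h2 := fpos y hy
        linarith
    · rw [hf0]; exact fpos y hxy
    · exact fmonoPos x y hx hxy
  -- f 2 = 2
  have hc1 : 1 < f 2 := by
    have h := fmono (show (1:E) < 2 by norm_num)
    rwa [hf1] at h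
  have hcb : f 2 < f 3 := fmono (show (2:E) < 3 by norm_num)
  have hc0 : f 2 ≠ 0 := ne_of_gt (by linarith)
  have E1 : f 3 * (f 2 - 1) = f 2 + 1 := by
    have h := key 2 1 (by norm_num)
    norm_num at h
    rw [hf1] at h
    linear_combination h
  have hf4 : f 4 = f 2 * f 2 := by
    rw [show (4:E) = 2*2 by norm_num, fmul]
  have hf6 : f 6 = f 2 * f 3 := by
    rw [show (6:E) = 2*3 by norm_num, fmul]
  have E3 : f 5 * (f 2 * f 2 - 1) = f 3 * (f 2 * f 2 + 1) := by
    have h := key 4 1 (by norm_num)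
    norm_num at h
    rw [hf1, hf4] at h
    linear_combination h
  have E4 : f 5 * (f 3 - f 2) = f 3 + f 2 := by
    have h := key 5 1 (by norm_num)
    norm_num at h
    rw [hf1, hf4, hf6] at h
    have h' : f 3 * (f 5 - 1) = f 2 * (f 5 + 1) := by
      apply mul_left_cancel₀ hc0
      linear_combination h
    linear_combination h'
  have hc2 : f 2 = 2 := by
    obtain ⟨c, hc⟩ : ∃ c, c = f 2 := ⟨_, rfl⟩
    obtain ⟨b, hb⟩ : ∃ b, b = f 3 := ⟨_, rfl⟩
    obtain ⟨d, hd⟩ : ∃ d, d = f 5 := ⟨_, rfl⟩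
    rw [← hc, ← hb] at E1
    rw [← hc, ← hb, ← hd] at E3 E4
    rw [← hc] at hc1
    rw [← hc]
    have h1 : (b + c) * (c - 1) = c*c + 1 := by linear_combination E1
    have h2 : (b - c) * (c - 1) = -(c*c) + 2*c + 1 := by linear_combination E1
    have hstar : (b + c) * (c*c - 1) = b * (c*c + 1) * (b - c) := by
      linear_combination (b - c) * E3 - (c*c - 1) * E4
    have hA2 : (c*c+1) * ((c*c-1)*(c-1)) = (c+1)*(c*c+1)*(-(c*c)+2*c+1) := by
      calc (c*c+1)*((c*c-1)*(c-1)) = ((b+c)*(c-1))*((c*c-1)*(c-1)) := by rw [h1]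
        _ = ((b+c)*(c*c-1))*((c-1)*(c-1)) := by ring
        _ = (b*(c*c+1)*(b-c))*((c-1)*(c-1)) := by rw [hstar]
        _ = (b*(c-1))*(c*c+1)*((b-c)*(c-1)) := by ring
        _ = (c+1)*(c*c+1)*(-(c*c)+2*c+1) := by rw [E1, h2]
    have hz : (c - 2) * ((c*c+1)*((c+1)*(2*c))) = 0 := by linear_combination hA2
    have hcpos : (0:E) < c := by linarith
    have hpos : 0 < (c*c+1)*((c+1)*(2*c)) := by
      have hp1 : (0:E) < c*c+1 := by nlinarith
      have hp2 : (0:E) < (c+1)*(2*c) := by nlinarith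
      exact mul_pos hp1 hp2
    rcases mul_eq_zero.mp hz with h | h
    · linarith [sub_eq_zero.mp h]
    · linarith
  -- step lemma
  have hstep : ∀ t : E, t ≠ 0 → f t = t → f (t+1) = t+1 → f (t+2) = t+2 := by
    intro t ht h0 h1
    have hne : t + 1 ≠ 1 := fun h => ht (by linarith)
    have hk := key (t+1) 1 hne
    rw [hf1, h1, show t+1-1 = t by ring, h0, show t+1+1 = t+2 by ring] at hk
    exact mul_right_cancel₀ ht (by linear_combination hk)
  -- f fixes the naturals
  have fnatAux : ∀ n : ℕ, f ((n:E)+1) = (n:E)+1 ∧ f ((n:E)+2) = (n:E)+2 := by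
    intro n
    induction n with
    | zero =>
      constructor
      · simpa using hf1
      · simpa using hc2
    | succ n ih =>
      have hcast : ((n+1 : ℕ) : E) = (n:E) + 1 := by push_cast; ring
      rw [hcast]
      constructor
      · rw [show (n:E)+1+1 = (n:E)+2 by ring]; exact ih.2
      · have ht : (n:E) + 1 ≠ 0 := by positivity
        have h1 : f ((n:E)+1+1) = (n:E)+1+1 := by
          rw [show (n:E)+1+1 = (n:E)+2 by ring]; exact ih.2
        exact hstep ((n:E)+1) ht ih.1 h1
  have fnat : ∀ n : ℕ, f ((n:E)) = (n:E) := by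
    intro n
    cases n with
    | zero => simpa using hf0
    | succ m => push_cast; exact (fnatAux m).1
  -- f fixes the integers
  have fint : ∀ m : ℤ, f ((m:E)) = (m:E) := by
    intro m
    obtain ⟨n, rfl | rfl⟩ := m.eq_nat_or_neg
    · simp only [Int.cast_natCast]; exact fnat n
    · simp only [Int.cast_neg, Int.cast_natCast]
      rw [fneg, fnat]
  -- f fixes the rationals
  have frat : ∀ q : ℚ, f ((q:E)) = (q:E) := by
    intro q
    have hq : (q : E) = (q.num : E) / (q.den : E) := Rat.cast_def q
    rw [hq, fdiv, fint, fnat]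
  -- conclusion by density
  intro x
  by_contra hne
  rcases lt_or_gt_of_ne hne with h | h
  · obtain ⟨q, hq1, hq2⟩ := exists_rat_btwn (show ((f x : E) : ℝ) < (x:ℝ) from h)
    have hcast : ((q:E):ℝ) = (q:ℝ) := by push_cast; ring
    have hq2' : (q : E) < x := by
      show ((q:E):ℝ) < (x:ℝ)
      rw [hcast]; exact hq2
    have hm := fmono hq2'
    rw [frat q] at hm
    have h' : ((q:E):ℝ) < ((f x : E):ℝ) := hm
    rw [hcast] at h'
    linarith
  · obtain ⟨q, hq1, hq2⟩ := exists_rat_btwn (show ((x:ℝ)) < ((f x : E):ℝ) from h)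
    have hcast : ((q:E):ℝ) = (q:ℝ) := by push_cast; ring
    have hq1' : x < (q : E) := by
      show (x:ℝ) < ((q:E):ℝ)
      rw [hcast]; exact hq1
    have hm := fmono hq1'
    rw [frat q] at hm
    have h' : ((f x : E):ℝ) < ((q:E):ℝ) := hm
    rw [hcast] at h'
    linarith
end

section
/- Let E be a Euclidean subfield of ℝ, let F = E(i) = { a + b·i : a, b ∈ E } ⊆ ℂ, and let f : F → F be an SD map that preserves ℝ (i.e., f(x) is real for every x ∈ F ∩ ℝ). Then either f is the identity map (f(z) = z for all z ∈ F) or f is complex conjugation restricted to F (f(z) = z̄ for all z ∈ F). -/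
/-!
An SD map `f` on a field is multiplicative, odd, fixes the prime field, and satisfies
`(f u - f v) f(u + v) = (f u + f v) f(u - v)`. On the Euclidean field `E` a real-preserving `f`
is positive on squares, i.e. on positive elements; then `f((x + 1)/(x - 1)) > 0` forces `f x > 1`
for `x > 1`, so `f` is increasing and fixes `E` by density of `ℚ`. Next `f(i) = ±i`, and after
composing with conjugation we may assume `f(i) = i`. For `z = a + bi` the identity at `(a, bi)`
gives `z̄ f(z) = z f(z̄)`, while `f(z) f(z̄) = z z̄`; hence `f(z)² = z²`. Since every element of
`E(i)` is a square in `E(i)`, `f` fixes `E(i)`.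
-/

/-- For a subfield `E` of `ℝ`, the set `F = E(i) = { a + b·i : a, b ∈ E }` inside `ℂ`. -/
def adjoinI (E : Subfield ℝ) : Set ℂ :=
  {z : ℂ | ∃ a ∈ E, ∃ b ∈ E, z = (a : ℂ) + (b : ℂ) * Complex.I}

def IsSDMapOn {K : Type*} [Field K] (S : Set K) (f : K → K) : Prop :=
  ∀ x ∈ S, ∀ y ∈ S, x ≠ y → f x ≠ f y ∧ f ((x + y) / (x - y)) = (f x + f y) / (f x - f y)

theorem add_div_sub_add_one_div_sub_one {K : Type*} [Field K] [NeZero (2 : K)] {a b : K}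
    (hab : a ≠ b) : ((a + b) / (a - b) + 1) / ((a + b) / (a - b) - 1) = a / b := by
  have hab' : a - b ≠ 0 := sub_ne_zero.2 hab
  rw [div_add_one hab', div_sub_one hab', div_div_div_cancel_right₀ hab',
    show a + b + (a - b) = 2 * a by ring, show a + b - (a - b) = 2 * b by ring,
    mul_div_mul_left _ _ two_ne_zero]

namespace IsSDMapOn

variable {K : Type*} [Field K] {S : Subfield K} {f : K → K}

theorem map_ne (hf : IsSDMapOn S f) {x y : K} (hx : x ∈ S) (hy : y ∈ S) (hxy : x ≠ y) :
    f x ≠ f y :=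
  (hf x hx y hy hxy).1

theorem map_add_div_sub (hf : IsSDMapOn S f) {x y : K} (hx : x ∈ S) (hy : y ∈ S) (hxy : x ≠ y) :
    f ((x + y) / (x - y)) = (f x + f y) / (f x - f y) :=
  (hf x hx y hy hxy).2

theorem ringHom_comp (hf : IsSDMapOn S f) (σ : K →+* K) : IsSDMapOn S (σ ∘ f) :=
  fun x hx y hy hxy => ⟨σ.injective.ne (hf.map_ne hx hy hxy), by
    simp only [Function.comp_apply, hf.map_add_div_sub hx hy hxy, map_div₀, map_add, map_sub]⟩

section NeZeroTwo

variable [NeZero (2 : K)]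

theorem map_one (hf : IsSDMapOn S f) : f 1 = 1 := by
  have key : ∀ a ∈ S, a ≠ 0 → f 1 * (f a - f 0) = f a + f 0 := fun a ha ha0 => by
    have h := hf.map_add_div_sub ha S.zero_mem ha0
    rwa [add_zero, sub_zero, div_self ha0,
      eq_div_iff (sub_ne_zero.2 (hf.map_ne ha S.zero_mem ha0))] at h
  have h12 : f 1 - f 2 ≠ 0 := sub_ne_zero.2 <| hf.map_ne S.one_mem (ofNat_mem S 2) fun h =>
    two_ne_zero (by linear_combination -2 * h : (2 : K) = 0)
  have h1 := key 1 S.one_mem one_ne_zero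
  have h2 := key 2 (ofNat_mem S 2) two_ne_zero
  exact mul_right_cancel₀ h12 (by linear_combination h1 - h2)

theorem map_zero (hf : IsSDMapOn S f) : f 0 = 0 := by
  have h := hf.map_add_div_sub S.one_mem S.zero_mem one_ne_zero
  rw [add_zero, sub_zero, div_one, hf.map_one,
    eq_div_iff (sub_ne_zero.2 (hf.map_one ▸ hf.map_ne S.one_mem S.zero_mem one_ne_zero))] at h
  exact (mul_eq_zero.1 (by linear_combination -h : (2 : K) * f 0 = 0)).resolve_left two_ne_zero

theorem map_ne_zero (hf : IsSDMapOn S f) {x : K} (hx : x ∈ S) (hx0 : x ≠ 0) : f x ≠ 0 :=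
  hf.map_zero ▸ hf.map_ne hx S.zero_mem hx0

theorem map_add_one_div_sub_one (hf : IsSDMapOn S f) {x : K} (hx : x ∈ S) (hx1 : x ≠ 1) :
    f ((x + 1) / (x - 1)) = (f x + 1) / (f x - 1) := by
  rw [hf.map_add_div_sub hx S.one_mem hx1, hf.map_one]

theorem map_neg (hf : IsSDMapOn S f) {x : K} (hx : x ∈ S) : f (-x) = -f x := by
  have hne : x + 1 ≠ x - 1 := fun h => two_ne_zero (by linear_combination h : (2 : K) = 0)
  have h₁ := hf.map_add_div_sub (add_mem hx S.one_mem) (sub_mem hx S.one_mem) hne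
  have h₂ := hf.map_add_div_sub (sub_mem hx S.one_mem) (add_mem hx S.one_mem) hne.symm
  have e₁ : (x + 1 + (x - 1)) / (x + 1 - (x - 1)) = x := by
    rw [show x + 1 - (x - 1) = 2 by ring]; field_simp; ring
  have e₂ : (x - 1 + (x + 1)) / (x - 1 - (x + 1)) = -x := by
    rw [show x - 1 - (x + 1) = -2 by ring]; field_simp; ring
  rw [e₁] at h₁
  rw [e₂] at h₂
  rw [h₁, h₂, ← neg_sub (f (x + 1)), div_neg, add_comm]

theorem map_div (hf : IsSDMapOn S f) {x y : K} (hx : x ∈ S) (hy : y ∈ S) (hy0 : y ≠ 0) :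
    f (x / y) = f x / f y := by
  obtain rfl | hxy := eq_or_ne x y
  · rw [div_self hy0, hf.map_one, div_self (hf.map_ne_zero hy hy0)]
  have hw1 : (x + y) / (x - y) ≠ 1 := fun h => hy0 <| by
    rw [div_eq_one_iff_eq (sub_ne_zero.2 hxy)] at h
    exact (mul_eq_zero.1 (by linear_combination h : (2 : K) * y = 0)).resolve_left two_ne_zero
  rw [← add_div_sub_add_one_div_sub_one hxy,
    hf.map_add_one_div_sub_one (div_mem (add_mem hx hy) (sub_mem hx hy)) hw1,
    hf.map_add_div_sub hx hy hxy, add_div_sub_add_one_div_sub_one (hf.map_ne hx hy hxy)]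

theorem map_mul (hf : IsSDMapOn S f) {x y : K} (hx : x ∈ S) (hy : y ∈ S) :
    f (x * y) = f x * f y := by
  obtain rfl | hy0 := eq_or_ne y 0
  · rw [mul_zero, hf.map_zero, mul_zero]
  rw [← div_mul_cancel₀ (f (x * y)) (hf.map_ne_zero hy hy0), ← hf.map_div (mul_mem hx hy) hy hy0,
    mul_div_cancel_right₀ x hy0]

theorem sub_one_mul_map_add_one (hf : IsSDMapOn S f) {x : K} (hx : x ∈ S) :
    (f x - 1) * f (x + 1) = (f x + 1) * f (x - 1) := by
  have hne : x + 1 ≠ x - 1 := fun h => two_ne_zero (by linear_combination h : (2 : K) = 0)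
  have h := hf.map_add_div_sub (add_mem hx S.one_mem) (sub_mem hx S.one_mem) hne
  rw [show x + 1 - (x - 1) = 2 by ring, show x + 1 + (x - 1) = 2 * x by ring,
    mul_div_cancel_left₀ x two_ne_zero,
    eq_div_iff (sub_ne_zero.2 (hf.map_ne (add_mem hx S.one_mem) (sub_mem hx S.one_mem) hne))] at h
  linear_combination h

theorem sub_mul_map_add (hf : IsSDMapOn S f) {x y : K} (hx : x ∈ S) (hy : y ∈ S) :
    (f x - f y) * f (x + y) = (f x + f y) * f (x - y) := by
  obtain rfl | hy0 := eq_or_ne y 0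
  · rw [hf.map_zero, add_zero, sub_zero, sub_zero, add_zero]
  obtain ⟨t, ht, rfl⟩ : ∃ t ∈ S, x = t * y := ⟨x / y, div_mem hx hy, by field_simp⟩
  rw [show t * y + y = (t + 1) * y by ring, show t * y - y = (t - 1) * y by ring,
    hf.map_mul (add_mem ht S.one_mem) hy, hf.map_mul (sub_mem ht S.one_mem) hy, hf.map_mul ht hy]
  linear_combination f y ^ 2 * hf.sub_one_mul_map_add_one ht

end NeZeroTwo

section CharZero

variable [CharZero K]

theorem map_two (hf : IsSDMapOn S f) : f 2 = 2 := by
  have h₂ := ofNat_mem S 2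
  have f₄ : f 4 = f 2 * f 2 := by rw [← hf.map_mul h₂ h₂]; norm_num
  have E₁ : (f 2 - 1) * f 3 = f 2 + 1 := by
    convert hf.sub_one_mul_map_add_one h₂ using 2 <;> norm_num [hf.map_one]
  have E₂ : (f 2 ^ 2 - 1) * f 5 = (f 2 ^ 2 + 1) * f 3 := by
    convert hf.sub_one_mul_map_add_one (ofNat_mem S 4) using 2 <;> norm_num [f₄, sq]
  have E₃ : (f 3 - f 2) * f 5 = f 3 + f 2 := by
    convert hf.sub_mul_map_add (ofNat_mem S 3) h₂ using 2 <;> norm_num [hf.map_one]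
  have hc₀ : f 2 ≠ 0 := hf.map_ne_zero h₂ two_ne_zero
  have hc₁ : f 2 + 1 ≠ 0 := by
    rw [← sub_neg_eq_add, sub_ne_zero, ← hf.map_one, ← hf.map_neg S.one_mem]
    exact hf.map_ne h₂ (neg_mem S.one_mem) (by norm_num)
  have hy : f 5 ≠ 0 := hf.map_ne_zero (ofNat_mem S 5) (by norm_num)
  -- eliminating `f 3` from `E₁`, `E₂`, `E₃`
  have key : (f 2 + 1) * (2 * f 2 * (f 2 - 2) * f 5) = 0 := by
    linear_combination (f 2 - 1) * E₂ + (f 2 ^ 2 + 1 + (f 2 + 1) * (f 5 - 1)) * E₁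
      - (f 2 + 1) * (f 2 - 1) * E₃
  simpa [hc₀, hc₁, hy, sub_eq_zero] using key

theorem map_natCast (hf : IsSDMapOn S f) (n : ℕ) : f n = n := by
  induction n using Nat.twoStepInduction with
  | zero => exact_mod_cast hf.map_zero
  | one => exact_mod_cast hf.map_one
  | more n ihn ihn1 =>
    obtain rfl | hn := eq_or_ne n 0
    · exact_mod_cast hf.map_two
    have h := hf.sub_one_mul_map_add_one (natCast_mem S (n + 1))
    push_cast at h ihn1 ⊢
    rw [ihn1, add_sub_cancel_right, ihn, show (n : K) + 1 + 1 = n + 2 by ring] at h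
    exact mul_left_cancel₀ (Nat.cast_ne_zero.2 hn) (by linear_combination h)

theorem map_intCast (hf : IsSDMapOn S f) (n : ℤ) : f n = n := by
  obtain ⟨n, rfl | rfl⟩ := Int.eq_nat_or_neg n <;> push_cast
  · exact hf.map_natCast n
  · rw [hf.map_neg (natCast_mem S n), hf.map_natCast]

theorem map_ratCast (hf : IsSDMapOn S f) (q : ℚ) : f q = q := by
  rw [Rat.cast_def, hf.map_div (intCast_mem S _) (natCast_mem S _) (Nat.cast_ne_zero.2 q.den_nz),
    hf.map_intCast, hf.map_natCast]

end CharZero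

end IsSDMapOn

def Subfield.IsEuclidean {L : Type*} [Field L] [LE L] (E : Subfield L) : Prop :=
  ∀ x ∈ E, 0 ≤ x → ∃ y ∈ E, y ^ 2 = x

namespace IsSDMapOn

variable {L : Type*} [Field L] [LinearOrder L] [IsStrictOrderedRing L] {E : Subfield L} {f : L → L}

theorem pos_of_pos (hf : IsSDMapOn E f) (hE : E.IsEuclidean) {x : L} (hx : x ∈ E) (hx0 : 0 < x) :
    0 < f x := by
  obtain ⟨y, hy, rfl⟩ := hE x hx hx0.le
  rw [pow_two, hf.map_mul hy hy]
  exact mul_self_pos.2 (hf.map_ne_zero hy (by rintro rfl; simp at hx0))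

theorem one_lt_of_one_lt (hf : IsSDMapOn E f) (hE : E.IsEuclidean) {x : L} (hx : x ∈ E)
    (hx1 : 1 < x) : 1 < f x := by
  have h := hf.pos_of_pos hE (div_mem (add_mem hx E.one_mem) (sub_mem hx E.one_mem))
    (div_pos (by linarith) (by linarith))
  rw [hf.map_add_one_div_sub_one hx hx1.ne',
    div_pos_iff_of_pos_left (by linarith [hf.pos_of_pos hE hx (by linarith)])] at h
  linarith

theorem strictMonoOn_pos (hf : IsSDMapOn E f) (hE : E.IsEuclidean) :
    StrictMonoOn f {x | x ∈ E ∧ 0 < x} := by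
  rintro x ⟨hx, hx0⟩ y ⟨hy, -⟩ hxy
  have h := hf.one_lt_of_one_lt hE (div_mem hy hx) ((one_lt_div hx0).2 hxy)
  rwa [hf.map_div hy hx hx0.ne', one_lt_div (hf.pos_of_pos hE hx hx0)] at h

theorem eq_self_of_isEuclidean [Archimedean L] (hf : IsSDMapOn E f) (hE : E.IsEuclidean)
    {x : L} (hx : x ∈ E) : f x = x := by
  suffices h : ∀ x ∈ E, 0 < x → f x = x by
    rcases lt_trichotomy x 0 with hx0 | rfl | hx0
    · linarith [hf.map_neg hx, h (-x) (neg_mem hx) (neg_pos.2 hx0)]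
    · exact hf.map_zero
    · exact h x hx hx0
  intro x hx hx0
  refine (eq_of_forall_rat_lt_iff_lt fun q => ?_).symm
  rcases le_or_gt (q : L) 0 with hq | hq
  · exact iff_of_true (by linarith) (by linarith [hf.pos_of_pos hE hx hx0])
  · simpa only [hf.map_ratCast] using
      ((hf.strictMonoOn_pos hE).lt_iff_lt ⟨SubfieldClass.ratCast_mem E q, hq⟩ ⟨hx, hx0⟩).symm

end IsSDMapOn

open Complex

section AdjoinI

variable {E : Subfield ℝ}

theorem mem_adjoinI {z : ℂ} : z ∈ adjoinI E ↔ z.re ∈ E ∧ z.im ∈ E := by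
  constructor
  · rintro ⟨a, ha, b, hb, rfl⟩
    simpa using ⟨ha, hb⟩
  · rintro ⟨hre, him⟩
    exact ⟨z.re, hre, z.im, him, (re_add_im z).symm⟩

theorem ofReal_mem_adjoinI {r : ℝ} (hr : r ∈ E) : (r : ℂ) ∈ adjoinI E :=
  mem_adjoinI.2 ⟨by simpa using hr, by simp⟩

variable (E) in
def adjoinISubfield : Subfield ℂ where
  carrier := adjoinI E
  zero_mem' := mem_adjoinI.2 ⟨by simp, by simp⟩
  one_mem' := mem_adjoinI.2 ⟨by simp, by simp⟩
  add_mem' hz hw := by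
    rw [mem_adjoinI] at *
    exact ⟨by simpa using add_mem hz.1 hw.1, by simpa using add_mem hz.2 hw.2⟩
  neg_mem' hz := by
    rw [mem_adjoinI] at *
    exact ⟨by simpa using neg_mem hz.1, by simpa using neg_mem hz.2⟩
  mul_mem' hz hw := by
    rw [mem_adjoinI] at *
    exact ⟨by simpa using sub_mem (mul_mem hz.1 hw.1) (mul_mem hz.2 hw.2),
      by simpa using add_mem (mul_mem hz.1 hw.2) (mul_mem hz.2 hw.1)⟩
  inv_mem' z hz := by
    rw [mem_adjoinI] at *
    have hn : normSq z ∈ E := by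
      rw [normSq_apply]; exact add_mem (mul_mem hz.1 hz.1) (mul_mem hz.2 hz.2)
    exact ⟨by simpa using div_mem hz.1 hn, by simpa [neg_div] using neg_mem (div_mem hz.2 hn)⟩

theorem I_mem_adjoinISubfield : I ∈ adjoinISubfield E := mem_adjoinI.2 ⟨by simp, by simp⟩

theorem exists_sq_eq_of_mem_adjoinI (hE : E.IsEuclidean) {z : ℂ} (hz : z ∈ adjoinI E) :
    ∃ w ∈ adjoinI E, w ^ 2 = z := by
  obtain ⟨a, ha, b, hb, rfl⟩ := hz
  obtain ⟨r, hr, hr0, hrab⟩ : ∃ r ∈ E, 0 ≤ r ∧ r ^ 2 = a ^ 2 + b ^ 2 := by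
    obtain ⟨y, hy, hy2⟩ := hE _ (add_mem (pow_mem ha 2) (pow_mem hb 2)) (by positivity)
    refine ⟨|y|, ?_, abs_nonneg y, by rw [sq_abs, hy2]⟩
    rcases abs_choice y with h | h <;> rw [h]
    exacts [hy, neg_mem hy]
  have har := abs_le_of_sq_le_sq' (by nlinarith : a ^ 2 ≤ r ^ 2) hr0
  obtain ⟨c, hc, hc2⟩ := hE ((r + a) / 2) (div_mem (add_mem hr ha) (ofNat_mem E 2)) (by linarith)
  obtain ⟨d, hd, hd2⟩ := hE ((r - a) / 2) (div_mem (sub_mem hr ha) (ofNat_mem E 2)) (by linarith)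
  have hcd : (2 * c * d) ^ 2 = b ^ 2 := by
    rw [mul_pow, mul_pow, hc2, hd2]; linear_combination hrab
  obtain ⟨d, hd, hd2, hcd⟩ : ∃ d' ∈ E, d' ^ 2 = (r - a) / 2 ∧ 2 * c * d' = b := by
    rcases sq_eq_sq_iff_eq_or_eq_neg.1 hcd with h | h
    · exact ⟨d, hd, hd2, h⟩
    · exact ⟨-d, neg_mem hd, by rw [neg_sq, hd2], by linarith⟩
  refine ⟨c + d * I, ⟨c, hc, d, hd, rfl⟩, ?_⟩
  calc ((c : ℂ) + d * I) ^ 2 = ((c ^ 2 - d ^ 2 : ℝ) : ℂ) + ((2 * c * d : ℝ) : ℂ) * I := by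
        push_cast; linear_combination (d : ℂ) ^ 2 * I_sq
    _ = a + b * I := by rw [hcd, show c ^ 2 - d ^ 2 = a by linarith]

end AdjoinI

namespace IsSDMapOn

variable {E : Subfield ℝ} {f : ℂ → ℂ}

theorem map_ofReal_of_isEuclidean (hf : IsSDMapOn (adjoinISubfield E) f)
    (hR : ∀ x ∈ adjoinI E, x.im = 0 → (f x).im = 0) (hE : E.IsEuclidean) {r : ℝ} (hr : r ∈ E) :
    f r = r := by
  set φ : ℝ → ℝ := fun x => (f x).re
  have hφ : ∀ x ∈ E, f x = φ x := fun x hx =>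
    Complex.ext rfl (by simpa using hR x (ofReal_mem_adjoinI hx) (ofReal_im x))
  have hsd : IsSDMapOn E φ := fun x hx y hy hxy => by
    have h := hf x (ofReal_mem_adjoinI hx) y (ofReal_mem_adjoinI hy) (ofReal_injective.ne hxy)
    rw [← ofReal_add, ← ofReal_sub, ← ofReal_div, hφ x hx, hφ y hy,
      hφ _ (div_mem (add_mem hx hy) (sub_mem hx hy))] at h
    exact_mod_cast h
  rw [hφ r hr, hsd.eq_self_of_isEuclidean hE hr]

theorem sq_map_eq_sq (hf : IsSDMapOn (adjoinISubfield E) f) (hfix : ∀ r ∈ E, f r = r)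
    (hI : f I = I) {z : ℂ} (hz : z ∈ adjoinI E) : f z ^ 2 = z ^ 2 := by
  obtain ⟨a, ha, b, hb, rfl⟩ := hz
  obtain h0 | h0 := eq_or_ne ((a : ℂ) + b * I) 0
  · rw [h0, hf.map_zero]
  have hu : (a : ℂ) ∈ adjoinISubfield E := ofReal_mem_adjoinI ha
  have hv : (b : ℂ) * I ∈ adjoinISubfield E := mul_mem (ofReal_mem_adjoinI hb) I_mem_adjoinISubfield
  have hfv : f (b * I) = b * I := by
    rw [hf.map_mul (ofReal_mem_adjoinI hb) I_mem_adjoinISubfield, hfix b hb, hI]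
  have h₁ := hf.sub_mul_map_add hu hv
  rw [hfix a ha, hfv] at h₁
  have h₂ : f (a + b * I) * f (a - b * I) = (a + b * I) * (a - b * I) := by
    rw [← hf.map_mul (add_mem hu hv) (sub_mem hu hv),
      show ((a : ℂ) + b * I) * (a - b * I) = ((a ^ 2 + b ^ 2 : ℝ) : ℂ) by
        push_cast; linear_combination (-(b : ℂ) ^ 2) * I_sq,
      hfix _ (add_mem (pow_mem ha 2) (pow_mem hb 2))]
  have hconj : (a : ℂ) - b * I ≠ 0 := by
    simpa [sub_eq_add_neg] using (_root_.map_ne_zero (starRingEnd ℂ)).2 h0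
  refine mul_left_cancel₀ hconj ?_
  linear_combination f (a + b * I) * h₁ + (a + b * I) * h₂

theorem eq_self_of_map_I (hf : IsSDMapOn (adjoinISubfield E) f) (hE : E.IsEuclidean)
    (hfix : ∀ r ∈ E, f r = r) (hI : f I = I) {z : ℂ} (hz : z ∈ adjoinI E) : f z = z := by
  obtain ⟨w, hw, rfl⟩ := exists_sq_eq_of_mem_adjoinI hE hz
  rw [sq, hf.map_mul hw hw, ← sq, hf.sq_map_eq_sq hfix hI hw, sq]

end IsSDMapOn

theorem real_preserving_sd_map_euclidean_adjoinI_general (E : Subfield ℝ)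
    (hE : ∀ x : ℝ, x ∈ E → 0 ≤ x → ∃ y ∈ E, y ^ 2 = x)
    (f : ℂ → ℂ)
    (hSD : ∀ x ∈ adjoinI E, ∀ y ∈ adjoinI E, x ≠ y →
      f x ≠ f y ∧ f ((x + y) / (x - y)) = (f x + f y) / (f x - f y))
    (hR : ∀ x ∈ adjoinI E, x.im = 0 → (f x).im = 0) :
    (∀ z ∈ adjoinI E, f z = z) ∨ (∀ z ∈ adjoinI E, f z = (starRingEnd ℂ) z) := by
  have hf : IsSDMapOn (adjoinISubfield E) f := hSD
  have hfix : ∀ r ∈ E, f r = r := fun r hr => hf.map_ofReal_of_isEuclidean hR hE hr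
  have hfI : f I ^ 2 = I ^ 2 := by
    rw [sq, ← hf.map_mul I_mem_adjoinISubfield I_mem_adjoinISubfield, I_mul_I,
      hf.map_neg (one_mem _), hf.map_one, I_sq]
  rcases sq_eq_sq_iff_eq_or_eq_neg.1 hfI with hfI | hfI
  · exact Or.inl fun z hz => hf.eq_self_of_map_I hE hfix hfI hz
  · refine Or.inr fun z hz => ?_
    have h := (hf.ringHom_comp (starRingEnd ℂ)).eq_self_of_map_I hE
      (fun r hr => by simp [hfix r hr]) (by simp [hfI]) hz
    simpa using congrArg (starRingEnd ℂ) h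

theorem real_preserving_sd_map_euclidean_adjoinI (E : Subfield ℝ)
    (hE : ∀ x : ℝ, x ∈ E → 0 ≤ x → ∃ y ∈ E, y ^ 2 = x)
    (f : ℂ → ℂ)
    (hmap : ∀ z ∈ adjoinI E, f z ∈ adjoinI E)
    (hSD : ∀ x ∈ adjoinI E, ∀ y ∈ adjoinI E, x ≠ y →
      f x ≠ f y ∧ f ((x + y) / (x - y)) = (f x + f y) / (f x - f y))
    (hR : ∀ x ∈ adjoinI E, x.im = 0 → (f x).im = 0) :
    (∀ z ∈ adjoinI E, f z = z) ∨ (∀ z ∈ adjoinI E, f z = (starRingEnd ℂ) z) :=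
  real_preserving_sd_map_euclidean_adjoinI_general E hE f hSD hR
end

section
/- Let d be a rational number whose square root is irrational, let s ∈ ℂ be a fixed square root of d, and let K = ℚ(s) = { a + b·s : a, b ∈ ℚ } ⊆ ℂ, with conjugation automorphism defined by (a + b·s)‾ = a − b·s for a, b ∈ ℚ. Let f : K → K be an SD map. Then exactly one of the following holds: (1) f(s) = s and for every z ∈ K, f(z) = z or f(z) = −z; or (2) f(s) = −s and for every z ∈ K, f(z) = z‾ or f(z) = −z‾. -/
/-- The subfield `ℚ(s) = { a + b·s : a, b ∈ ℚ }` of `ℂ`, as a set. -/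
def ratAdjoin (s : ℂ) : Set ℂ :=
  {z : ℂ | ∃ a b : ℚ, z = (a : ℂ) + (b : ℂ) * s}

theorem sd_map_quadratic_field_dichotomy (d : ℚ) (hd : ¬∃ q : ℚ, q ^ 2 = d)
    (s : ℂ) (hs : s ^ 2 = (d : ℂ))
    (f : ℂ → ℂ)
    (hmap : ∀ z ∈ ratAdjoin s, f z ∈ ratAdjoin s)
    (hSD : ∀ x ∈ ratAdjoin s, ∀ y ∈ ratAdjoin s, x ≠ y →
      f x ≠ f y ∧ f ((x + y) / (x - y)) = (f x + f y) / (f x - f y)) :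
    Xor'
      (f s = s ∧ ∀ z ∈ ratAdjoin s, f z = z ∨ f z = -z)
      (f s = -s ∧ ∀ a b : ℚ,
        f ((a : ℂ) + (b : ℂ) * s) = (a : ℂ) - (b : ℂ) * s ∨
        f ((a : ℂ) + (b : ℂ) * s) = -((a : ℂ) - (b : ℂ) * s)) := by
  set K := ratAdjoin s with hKdef
  have memq : ∀ q : ℚ, (q : ℂ) ∈ K := fun q => ⟨q, 0, by push_cast; ring⟩
  have mems : s ∈ K := ⟨0, 1, by push_cast; ring⟩
  have memadd : ∀ {x y : ℂ}, x ∈ K → y ∈ K → x + y ∈ K := by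
    rintro x y ⟨a, b, rfl⟩ ⟨c, e, rfl⟩
    exact ⟨a + c, b + e, by push_cast; ring⟩
  have memneg : ∀ {x : ℂ}, x ∈ K → -x ∈ K := by
    rintro x ⟨a, b, rfl⟩
    exact ⟨-a, -b, by push_cast; ring⟩
  have memsub : ∀ {x y : ℂ}, x ∈ K → y ∈ K → x - y ∈ K := by
    intro x y hx hy
    rw [sub_eq_add_neg]; exact memadd hx (memneg hy)
  have memmul : ∀ {x y : ℂ}, x ∈ K → y ∈ K → x * y ∈ K := by
    rintro x y ⟨a, b, rfl⟩ ⟨c, e, rfl⟩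
    exact ⟨a * c + b * e * d, a * e + b * c, by push_cast; linear_combination ((b : ℂ) * e) * hs⟩
  have hlin : ∀ a b : ℚ, (a : ℂ) + b * s = 0 → a = 0 ∧ b = 0 := by
    intro a b hab
    by_cases hb : b = 0
    · subst hb
      simp only [Rat.cast_zero, zero_mul, add_zero] at hab
      exact ⟨by exact_mod_cast hab, rfl⟩
    · exfalso
      apply hd
      refine ⟨-a / b, ?_⟩
      have hbC : (b : ℂ) ≠ 0 := by exact_mod_cast hb
      have hsv : s = ((-a / b : ℚ) : ℂ) := by
        push_cast
        field_simp
        linear_combination hab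
      have h1 : (((-a / b : ℚ) : ℂ)) ^ 2 = ((d : ℚ) : ℂ) := by
        rw [← hsv]; exact_mod_cast hs
      exact_mod_cast h1
  have hsne : ∀ q : ℚ, s ≠ (q : ℂ) := by
    intro q h
    have := (hlin (-q) 1 (by push_cast; rw [h]; ring)).2
    norm_num at this
  have hs0 : s ≠ 0 := by
    have := hsne 0; simpa using this
  -- numeral memberships
  have memnat : ∀ n : ℕ, (n : ℂ) ∈ K := fun n => by exact_mod_cast memq (n : ℚ)
  have mem0 : (0 : ℂ) ∈ K := by exact_mod_cast memq 0
  have mem1 : (1 : ℂ) ∈ K := by exact_mod_cast memq 1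
  have mem2 : (2 : ℂ) ∈ K := by exact_mod_cast memq 2
  have mem3 : (3 : ℂ) ∈ K := by exact_mod_cast memq 3
  have mem4 : (4 : ℂ) ∈ K := by exact_mod_cast memq 4
  -- f 1 = 1 and f 0 = 0
  have e2 := hSD 2 mem2 0 mem0 (by norm_num)
  have e3 := hSD 3 mem3 0 mem0 (by norm_num)
  have hne32 : f 3 ≠ f 2 := (hSD 3 mem3 2 mem2 (by norm_num)).1
  obtain ⟨ne2, h2⟩ := e2
  obtain ⟨ne3, h3⟩ := e3
  norm_num at h2 h3
  rw [eq_div_iff (sub_ne_zero.mpr ne2)] at h2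
  rw [eq_div_iff (sub_ne_zero.mpr ne3)] at h3
  have hf1 : f 1 = 1 := by
    have hd23 : f 2 - f 3 ≠ 0 := sub_ne_zero.mpr (Ne.symm hne32)
    have hkey : (f 1 - 1) * (f 2 - f 3) = 0 := by linear_combination h2 - h3
    rcases mul_eq_zero.mp hkey with h | h
    · linear_combination h
    · exact absurd h hd23
  have hf0 : f 0 = 0 := by
    rw [hf1] at h2
    have hne20 : f 2 - f 0 ≠ 0 := sub_ne_zero.mpr ne2
    linear_combination -h2 / 2
  -- odd
  have hodd : ∀ x ∈ K, f (-x) = -f x := by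
    intro x hx
    by_cases hx0 : x = 0
    · subst hx0; simp [hf0]
    · have hxne : x ≠ -x := fun h => hx0 (by linear_combination h / 2)
      obtain ⟨hne, heq⟩ := hSD x hx (-x) (memneg hx) hxne
      have hq : (x + -x) / (x - -x) = 0 := by
        rw [show x + -x = 0 by ring]; simp
      rw [hq, hf0] at heq
      have := (div_eq_zero_iff.mp heq.symm).resolve_right (sub_ne_zero.mpr hne)
      linear_combination this
  -- cross lemma
  have hcross : ∀ t ∈ K, ∀ x ∈ K, ∀ y ∈ K, t ≠ 0 → x ≠ y →
      f (t * x) * f y = f (t * y) * f x := by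
    intro t ht x hx y hy ht0 hxy
    obtain ⟨hne1, heq1⟩ := hSD x hx y hy hxy
    obtain ⟨hne2, heq2⟩ := hSD (t * x) (memmul ht hx) (t * y) (memmul ht hy)
      (fun h => hxy (mul_left_cancel₀ ht0 h))
    have hq : (t * x + t * y) / (t * x - t * y) = (x + y) / (x - y) := by
      rw [show t * x + t * y = t * (x + y) by ring, show t * x - t * y = t * (x - y) by ring,
        mul_div_mul_left _ _ ht0]
    rw [hq, heq1] at heq2
    have d1 : f x - f y ≠ 0 := sub_ne_zero.mpr hne1
    have d2 : f (t * x) - f (t * y) ≠ 0 := sub_ne_zero.mpr hne2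
    field_simp at heq2
    linear_combination heq2 / 2
  -- multiplicativity
  have hmul : ∀ t ∈ K, ∀ x ∈ K, f (t * x) = f t * f x := by
    intro t ht x hx
    by_cases ht0 : t = 0
    · subst ht0; simp [hf0]
    · by_cases hx0 : x = 0
      · subst hx0; simp [hf0]
      · by_cases hx1 : x = 1
        · subst hx1; simp [hf1]
        · have := hcross t ht x hx 1 mem1 ht0 hx1
          rw [mul_one, hf1, mul_one] at this
          rw [this]
  -- recurrence
  have hrec : ∀ x ∈ K, f (x + 1) * (f x - 1) = f (x - 1) * (f x + 1) := by
    intro x hx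
    obtain ⟨hne, heq⟩ := hSD (x + 1) (memadd hx mem1) (x - 1) (memsub hx mem1)
      (fun h => absurd (by linear_combination h : (1 : ℂ) = -1) (by norm_num))
    have hq : (x + 1 + (x - 1)) / (x + 1 - (x - 1)) = x := by
      rw [show x + 1 + (x - 1) = 2 * x by ring, show x + 1 - (x - 1) = 2 by ring]
      rw [mul_div_assoc]
      ring
    rw [hq, eq_div_iff (sub_ne_zero.mpr hne)] at heq
    linear_combination heq
  -- f 2 = 2
  have hf2 : f 2 = 2 := by
    set a := f 2 with ha
    -- E3 : f 3 * (a - 1) = a + 1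
    have E3 : f 3 * (a - 1) = a + 1 := by
      have := hrec 2 mem2
      norm_num at this
      rw [hf1] at this
      linear_combination this
    -- E4 : f 4 = a * a
    have E4 : f 4 = a * a := by
      have := hmul 2 mem2 2 mem2
      norm_num at this
      exact this
    -- EG : f (5/3) * (f 4 - 1) = f 4 + 1
    have hne41 : f 4 ≠ f 1 := (hSD 4 mem4 1 mem1 (by norm_num)).1
    have EG : f (5 / 3) * (f 4 - 1) = f 4 + 1 := by
      obtain ⟨hne, heq⟩ := hSD 4 mem4 1 mem1 (by norm_num)
      norm_num at heq
      rw [hf1] at heq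
      rw [eq_div_iff (sub_ne_zero.mpr (by rw [← hf1]; exact hne))] at heq
      linear_combination heq
    -- E5 : f 5 * (f 3 - a) = f 3 + a
    have E5 : f 5 * (f 3 - a) = f 3 + a := by
      obtain ⟨hne, heq⟩ := hSD 3 mem3 2 mem2 (by norm_num)
      norm_num at heq
      rw [eq_div_iff (sub_ne_zero.mpr hne)] at heq
      linear_combination heq
    -- E53 : f 5 = f (5/3) * f 3
    have mem53 : (5 / 3 : ℂ) ∈ K := by
      have h := memq (5 / 3)
      rwa [show ((5 / 3 : ℚ) : ℂ) = (5 / 3 : ℂ) by norm_num] at h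
    have E53 : f 5 = f (5 / 3) * f 3 := by
      have := hmul (5 / 3) mem53 3 mem3
      norm_num at this
      exact this
    -- nonzero facts
    have hw0 : f 5 ≠ 0 := by
      have := (hSD 5 (by exact_mod_cast memq 5) 0 mem0 (by norm_num)).1
      rwa [hf0] at this
    have ha1 : a - 1 ≠ 0 := by
      have := (hSD 2 mem2 1 mem1 (by norm_num)).1
      rw [hf1] at this
      exact sub_ne_zero.mpr this
    have ha0 : a ≠ 0 := by
      have := (hSD 2 mem2 0 mem0 (by norm_num)).1
      rwa [hf0] at this
    have hap1 : a + 1 ≠ 0 := by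
      have h := (hSD 2 mem2 (-1) (memneg mem1) (by norm_num)).1
      rw [hodd 1 mem1, hf1] at h
      intro hc
      exact h (by linear_combination hc)
    have haa1 : a * a + 1 ≠ 0 := by
      have h := (hSD 4 mem4 (-1) (memneg mem1) (by norm_num)).1
      rw [hodd 1 mem1, hf1, E4] at h
      intro hc
      exact h (by linear_combination hc)
    -- elimination
    have K1 : f 5 * (-(a * a) + 2 * a + 1) = a * a + 1 := by
      linear_combination (a - 1) * E5 + (1 - f 5) * E3
    have K2 : f 5 * (a * a - 1) = (a * a + 1) * f 3 := by
      linear_combination (a * a - 1) * E53 + f 3 * EG + (1 - f (5 / 3)) * f 3 * E4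
    have K3 : f 5 * ((a * a - 1) * (a - 1)) = (a * a + 1) * (a + 1) := by
      linear_combination (a - 1) * K2 + (a * a + 1) * E3
    have K4 : f 5 * (a + 1) * (2 * a) * (2 - a) = 0 := by
      linear_combination (a + 1) * K1 - K3
    have hnz : f 5 * (a + 1) * (2 * a) ≠ 0 :=
      mul_ne_zero (mul_ne_zero hw0 hap1) (mul_ne_zero two_ne_zero ha0)
    have := (mul_eq_zero.mp K4).resolve_left hnz
    linear_combination -this
  -- f on naturals
  have hnat : ∀ n : ℕ, f n = n := by
    have key : ∀ n : ℕ, f n = n ∧ f (n + 1 : ℕ) = (n + 1 : ℕ) := by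
      intro n
      induction n with
      | zero => constructor <;> simp [hf0, hf1]
      | succ m ih =>
        refine ⟨ih.2, ?_⟩
        by_cases hm : m = 0
        · subst hm
          push_cast
          norm_num [hf2]
        · have hmC : (m : ℂ) ≠ 0 := Nat.cast_ne_zero.mpr hm
          have hr := hrec ((m : ℂ) + 1) (memadd (memnat m) mem1)
          rw [show (m : ℂ) + 1 - 1 = (m : ℂ) by ring] at hr
          have h1 : f ((m : ℂ) + 1) = (m : ℂ) + 1 := by
            have := ih.2; push_cast at this; exact this
          have h0 : f (m : ℂ) = (m : ℂ) := ih.1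
          rw [h1, h0] at hr
          -- hr : f (↑m + 1 + 1) * (↑m + 1 - 1) = ↑m * (↑m + 1 + 1)
          have : f ((m : ℂ) + 1 + 1) * (m : ℂ) = ((m : ℂ) + 2) * (m : ℂ) := by
            linear_combination hr
          have := mul_right_cancel₀ hmC this
          push_cast
          rw [show ((m : ℂ) + 1 + 1) = (m : ℂ) + 2 by ring] at this ⊢
          rw [this]
    exact fun n => (key n).1
  -- f on integers
  have hint : ∀ n : ℤ, f n = n := by
    intro n
    obtain ⟨m, rfl | rfl⟩ := Int.eq_nat_or_neg n
    · push_cast; exact hnat m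
    · push_cast
      rw [hodd m (memnat m), hnat m]
  -- f on rationals
  have hrat : ∀ q : ℚ, f (q : ℂ) = (q : ℂ) := by
    intro q
    have hden : ((q.den : ℂ)) ≠ 0 := Nat.cast_ne_zero.mpr q.den_nz
    have hqd : (q : ℂ) * (q.den : ℂ) = (q.num : ℂ) := by
      have := Rat.mul_den_eq_num q
      exact_mod_cast congrArg (Rat.cast : ℚ → ℂ) this
    have h1 : f ((q : ℂ) * (q.den : ℂ)) = f (q : ℂ) * f (q.den : ℂ) :=
      hmul _ (memq q) _ (memnat q.den)
    rw [hqd, hint q.num, hnat q.den] at h1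
    have h2 : f (q : ℂ) = (q.num : ℂ) / (q.den : ℂ) := by
      rw [eq_div_iff hden]; exact h1.symm
    rw [h2, Rat.cast_def]
  -- f s squared
  have hfs2 : f s * f s = (d : ℂ) := by
    have h1 : f (s * s) = f s * f s := hmul s mems s mems
    rw [show s * s = ((d : ℚ) : ℂ) by rw [← hs]; ring] at h1
    rw [hrat d] at h1
    exact h1.symm
  have hcase : f s = s ∨ f s = -s := by
    have : (f s - s) * (f s + s) = 0 := by linear_combination hfs2 - hs
    rcases mul_eq_zero.mp this with h | h
    · left; linear_combination h
    · right; linear_combination h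
  -- key : f (s + q) = ±(f s + q)
  have hqs : ∀ q : ℚ, f (s + q) = f s + q ∨ f (s + q) = -(f s + q) := by
    intro q
    by_cases hq0 : q = 0
    · subst hq0; left; simp
    · have hqC : (q : ℂ) ≠ 0 := by exact_mod_cast hq0
      have mA : s + (q : ℂ) ∈ K := memadd mems (memq q)
      have mB : s - (q : ℂ) ∈ K := memsub mems (memq q)
      have hABne : s + (q : ℂ) ≠ s - (q : ℂ) := by
        intro h
        exact hqC (by linear_combination h / 2)
      obtain ⟨hne, heq⟩ := hSD (s + q) mA (s - q) mB hABne
      have hqquot : (s + (q : ℂ) + (s - q)) / (s + q - (s - q)) = s * ((q⁻¹ : ℚ) : ℂ) := by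
        rw [show s + (q : ℂ) + (s - q) = 2 * s by ring,
          show s + (q : ℂ) - (s - q) = 2 * (q : ℂ) by ring,
          mul_div_mul_left _ _ (two_ne_zero), Rat.cast_inv, div_eq_mul_inv]
      rw [hqquot, hmul s mems _ (memq q⁻¹), hrat] at heq
      rw [eq_div_iff (sub_ne_zero.mpr hne)] at heq
      -- heq : f s * ↑q⁻¹ * (f (s+q) - f (s-q)) = f (s+q) + f (s-q)
      rw [Rat.cast_inv] at heq
      have P1 : f (s + q) * (f s - q) = f (s - q) * (f s + q) := by
        field_simp at heq
        linear_combination heq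
      have P2 : f (s + q) * f (s - q) = f s * f s - (q : ℂ) * q := by
        have h1 : f ((s + q) * (s - q)) = f (s + q) * f (s - q) := hmul _ mA _ mB
        rw [show (s + (q : ℂ)) * (s - q) = ((d - q * q : ℚ) : ℂ) by push_cast; linear_combination hs] at h1
        rw [hrat] at h1
        push_cast at h1
        rw [← h1]
        linear_combination -hfs2
      have hfsq : f s - (q : ℂ) ≠ 0 := by
        have h := (hSD s mems q (memq q) (hsne q)).1
        rw [hrat] at h
        exact sub_ne_zero.mpr h
      have h5 : (f (s + q) - (f s + q)) * (f (s + q) + (f s + q)) * (f s - q) = 0 := by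
        linear_combination f (s + q) * P1 + (f s + (q : ℂ)) * P2
      rcases mul_eq_zero.mp h5 with h | h
      · rcases mul_eq_zero.mp h with h | h
        · left; linear_combination h
        · right; linear_combination h
      · exact absurd h hfsq
  -- key for general elements
  have hkey : ∀ a b : ℚ, f ((a : ℂ) + (b : ℂ) * s) = (a : ℂ) + (b : ℂ) * f s ∨
      f ((a : ℂ) + (b : ℂ) * s) = -((a : ℂ) + (b : ℂ) * f s) := by
    intro a b
    by_cases hb : b = 0
    · subst hb
      left
      simp [hrat a]
    · have hbC : (b : ℂ) ≠ 0 := by exact_mod_cast hb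
      have hsplit : (a : ℂ) + (b : ℂ) * s = (b : ℂ) * (s + ((a / b : ℚ) : ℂ)) := by
        push_cast
        field_simp
        ring
      have h1 : f ((b : ℂ) * (s + ((a / b : ℚ) : ℂ))) = f (b : ℂ) * f (s + ((a / b : ℚ) : ℂ)) :=
        hmul _ (memq b) _ (memadd mems (memq (a / b)))
      rw [hrat b] at h1
      have habq : (b : ℂ) * ((a / b : ℚ) : ℂ) = (a : ℂ) := by
        push_cast; field_simp
      rcases hqs (a / b) with h | h
      · left
        rw [hsplit, h1, h]
        linear_combination habq
      · right
        rw [hsplit, h1, h]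
        linear_combination -habq
  -- final assembly
  unfold Xor'
  rcases hcase with hfs | hfs
  · refine Or.inl ⟨⟨hfs, ?_⟩, ?_⟩
    · rintro z ⟨a, b, rfl⟩
      rcases hkey a b with h | h
      · left; rw [h, hfs]
      · right; rw [h, hfs]
    · rintro ⟨hfs', -⟩
      rw [hfs] at hfs'
      exact hs0 (by linear_combination hfs' / 2)
  · refine Or.inr ⟨⟨hfs, ?_⟩, ?_⟩
    · intro a b
      rcases hkey a b with h | h
      · left; rw [h, hfs]; ring
      · right; rw [h, hfs]; ring
    · rintro ⟨hfs', -⟩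
      rw [hfs] at hfs'
      exact hs0 (by linear_combination -hfs' / 2)
end
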